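/- arXiv:2210.06638 — 3 statements merged into one kernel-verified Lean document; each statement's English description precedes it below -/
import Mathlib

section
/- Let m and n be positive integers, and let a_1, ..., a_m and b_1, ..., b_n be positive integers such that no integer greater than 1 divides all of a_1, ..., a_m, b_1, ..., b_n, such that a_1 ≠ 1 if m = 1, such that b_1 ≠ 1 if n = 1, and such that a_1 + ... + a_m > b_1 + ... + b_n. Then there exists an additive submonoid M of the nonnegative real numbers and elements α_1, ..., α_m, β_1, ..., β_n of M such that: M is a length-factorial monoid; each α_i is a purely long atom of M; each β_j is a purely short atom of M; a_1·α_1 + ... + a_m·α_m = b_1·β_1 + ... + b_n·β_n; and this relation, viewed as a pair of factorizations, is an unbalanced master factorization relation of M. -/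
section Defs

variable {M : Type*} [AddCommMonoid M]

/-- `a` is an atom (irreducible element) of the additive monoid `M`. -/
def IsAddAtom (a : M) : Prop :=
  ¬IsAddUnit a ∧ ∀ x y : M, a = x + y → IsAddUnit x ∨ IsAddUnit y

/-- `a` divides `x` in the additive monoid `M`. -/
def AddDvd (a x : M) : Prop := ∃ c : M, x = a + c

/-- `a` is a prime element of the additive monoid `M`. -/
def IsAddPrime (a : M) : Prop :=
  ¬IsAddUnit a ∧ ∀ x y : M, AddDvd a (x + y) → AddDvd a x ∨ AddDvd a y

/-- `z` is a factorization of `x`: a multiset of atoms whose sum is `x`. -/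
def IsFactorizationOf (z : Multiset M) (x : M) : Prop :=
  (∀ a ∈ z, IsAddAtom a) ∧ z.sum = x

/-- `M` is atomic: every non-invertible element is a sum of atoms. -/
def IsAddAtomic (M : Type*) [AddCommMonoid M] : Prop :=
  ∀ x : M, ¬IsAddUnit x → ∃ z : Multiset M, IsFactorizationOf z x

/-- `M` is length-factorial: it is atomic and any two factorizations of the
same element having the same length are equal. -/
def IsLFM (M : Type*) [AddCommMonoid M] : Prop :=
  IsAddAtomic M ∧
    ∀ (x : M) (z₁ z₂ : Multiset M), IsFactorizationOf z₁ x → IsFactorizationOf z₂ x →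
      Multiset.card z₁ = Multiset.card z₂ → z₁ = z₂

/-- A pair of factorizations is irredundant if no atom appears in both. -/
def Irredundant (z₁ z₂ : Multiset M) : Prop := ∀ a ∈ z₁, a ∉ z₂

/-- `a` is a purely long atom of `M`. -/
def IsPurelyLong (a : M) : Prop :=
  IsAddAtom a ∧ ¬IsAddPrime a ∧
    ∀ (x : M) (z₁ z₂ : Multiset M), IsFactorizationOf z₁ x → IsFactorizationOf z₂ x →
      Irredundant z₁ z₂ → a ∈ z₁ → Multiset.card z₂ < Multiset.card z₁

/-- `a` is a purely short atom of `M`. -/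
def IsPurelyShort (a : M) : Prop :=
  IsAddAtom a ∧ ¬IsAddPrime a ∧
    ∀ (x : M) (z₁ z₂ : Multiset M), IsFactorizationOf z₁ x → IsFactorizationOf z₂ x →
      Irredundant z₁ z₂ → a ∈ z₁ → Multiset.card z₁ < Multiset.card z₂

/-- `(z₁, z₂)` is a master factorization relation: it is a factorization relation, and
every irredundant unbalanced factorization relation of `M` is of the form `(k • z₁, k • z₂)`
or `(k • z₂, k • z₁)` for some positive integer `k`. -/
def IsMasterRel (z₁ z₂ : Multiset M) : Prop :=
  (∃ x : M, IsFactorizationOf z₁ x ∧ IsFactorizationOf z₂ x) ∧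
    ∀ (x : M) (w₁ w₂ : Multiset M), IsFactorizationOf w₁ x → IsFactorizationOf w₂ x →
      Irredundant w₁ w₂ → Multiset.card w₁ ≠ Multiset.card w₂ →
        ∃ k : ℕ, 0 < k ∧ ((w₁ = k • z₁ ∧ w₂ = k • z₂) ∨ (w₁ = k • z₂ ∧ w₂ = k • z₁))

end Defs

set_option linter.unusedSectionVars false

namespace MFA

noncomputable def xx : ℝ := liouvilleNumber 3

theorem xx_trans : Transcendental ℚ xx := by
  have h : Transcendental ℤ xx := by
    have := transcendental_liouvilleNumber (m := 3) (by norm_num)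
    simpa [xx] using this
  intro halg
  exact h ((IsFractionRing.isAlgebraic_iff ℤ ℚ ℝ).mpr halg)

theorem xx_nonneg : 0 ≤ xx := tsum_nonneg fun i => by positivity

variable (m n : ℕ)

def ee (i : Fin m) (j : Fin n) : ℕ := i.val * n + j.val + 1

theorem ee_inj {i i' : Fin m} {j j' : Fin n} (h : ee m n i j = ee m n i' j') :
    i = i' ∧ j = j' := by
  have h' : i.val * n + j.val = i'.val * n + j'.val := by
    simpa [ee] using h
  have key : ∀ u u' v v' : ℕ, v < n → v' < n → u * n + v = u' * n + v' → u ≤ u' := by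
    intro u u' v v' hv hv' hh
    by_contra hlt
    push_neg at hlt
    have h1 : u' + 1 ≤ u := hlt
    have h2 : (u' + 1) * n ≤ u * n := Nat.mul_le_mul_right n h1
    nlinarith
  have hi : i.val = i'.val :=
    le_antisymm (key _ _ _ _ j.isLt j'.isLt h') (key _ _ _ _ j'.isLt j.isLt h'.symm)
  rw [hi] at h'
  exact ⟨Fin.ext hi, Fin.ext (Nat.add_left_cancel h')⟩

theorem indep (q0 : ℚ) (Q : Fin m → Fin n → ℚ)
    (h : (q0 : ℝ) + ∑ i, ∑ j, (Q i j : ℝ) * xx ^ ee m n i j = 0) :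
    q0 = 0 ∧ ∀ i j, Q i j = 0 := by
  classical
  set p : Polynomial ℚ :=
    Polynomial.C q0 + ∑ i, ∑ j, Polynomial.C (Q i j) * Polynomial.X ^ ee m n i j with hp
  have hev : Polynomial.aeval xx p = 0 := by
    simp only [hp, map_add, map_sum, map_mul, map_pow, Polynomial.aeval_C, Polynomial.aeval_X]
    rw [show (algebraMap ℚ ℝ) = Rat.castHom ℝ from rfl]
    simpa using h
  have hp0 : p = 0 := by
    by_contra h0
    exact xx_trans ⟨p, h0, hev⟩
  have coeffzero : ∀ k, p.coeff k = 0 := by simp [hp0]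
  constructor
  · have := coeffzero 0
    simp only [hp, Polynomial.coeff_add, Polynomial.coeff_C_mul,
      Polynomial.finset_sum_coeff, Polynomial.coeff_X_pow, Polynomial.coeff_C, ee] at this
    simpa using this
  · intro i0 j0
    have := coeffzero (ee m n i0 j0)
    simp only [hp, Polynomial.coeff_add, Polynomial.coeff_C_mul,
      Polynomial.finset_sum_coeff, Polynomial.coeff_X_pow, Polynomial.coeff_C] at this
    have h1 : ∀ i, ∑ j, (if ee m n i0 j0 = ee m n i j then Q i j else 0)
        = if i = i0 then Q i0 j0 else 0 := by
      intro i
      split_ifs with hi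
      · subst hi
        rw [Finset.sum_eq_single j0]
        · simp
        · intro j _ hj
          rw [if_neg]
          intro hee
          exact hj (ee_inj m n hee.symm).2
        · simp
      · apply Finset.sum_eq_zero
        intro j _
        rw [if_neg]
        intro hee
        exact hi (ee_inj m n hee.symm).1
    have hne : ¬ (ee m n i0 j0 = 0) := by simp [ee]
    rw [if_neg hne] at this
    simp only [mul_ite, mul_one, mul_zero] at this
    rw [Finset.sum_congr rfl (fun i _ => h1 i)] at this
    simpa using this


variable (a : Fin m → ℕ) (b : Fin n → ℕ)

noncomputable def AA (i : Fin m) : ℝ :=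
  (∑ j, (b j : ℝ)) + ∑ j, (b j : ℝ) * xx ^ ee m n i j

noncomputable def BB (j : Fin n) : ℝ :=
  (∑ i, (a i : ℝ)) + ∑ i, (a i : ℝ) * xx ^ ee m n i j

theorem expandA (c : Fin m → ℝ) :
    ∑ i, c i * AA m n b i =
      (∑ i, c i) * (∑ j, (b j : ℝ)) + ∑ i, ∑ j, (c i * b j) * xx ^ ee m n i j := by
  simp only [AA, mul_add, Finset.sum_add_distrib, Finset.mul_sum, Finset.sum_mul, mul_assoc]
  congr 1
  exact Finset.sum_comm

theorem expandB (d : Fin n → ℝ) :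
    ∑ j, d j * BB m n a j =
      (∑ j, d j) * (∑ i, (a i : ℝ)) + ∑ i, ∑ j, (d j * a i) * xx ^ ee m n i j := by
  simp only [BB, mul_add, Finset.sum_add_distrib, Finset.mul_sum, Finset.sum_mul, mul_assoc]
  congr 1
  · exact Finset.sum_comm
  · exact Finset.sum_comm

/-- The key linear-independence lemma: an integer relation between the
generators is a multiple of the master relation. -/
theorem KL (hm : 0 < m) (hn : 0 < n) (ha : ∀ i, 0 < a i) (hb : ∀ j, 0 < b j)
    (hcop : ∀ d : ℕ, 1 < d → ¬((∀ i, d ∣ a i) ∧ (∀ j, d ∣ b j)))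
    (c : Fin m → ℤ) (d : Fin n → ℤ)
    (h : ∑ i, (c i : ℝ) * AA m n b i = ∑ j, (d j : ℝ) * BB m n a j) :
    ∃ k : ℤ, (∀ i, c i = k * a i) ∧ (∀ j, d j = k * b j) := by
  have hQ : ∀ i j, (c i : ℚ) * b j = (d j : ℚ) * a i := by
    have q0 : ℚ := 0
    set Q : Fin m → Fin n → ℚ := fun i j => c i * b j - d j * a i with hQdef
    set c0 : ℚ := (∑ i, (c i : ℚ)) * (∑ j, (b j : ℚ)) - (∑ j, (d j : ℚ)) * (∑ i, (a i : ℚ))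
      with hc0
    have hmain : (c0 : ℝ) + ∑ i, ∑ j, (Q i j : ℝ) * xx ^ ee m n i j = 0 := by
      rw [expandA m n b (fun i => (c i : ℝ))] at h
      rw [expandB m n a (fun j => (d j : ℝ))] at h
      have hS : ∑ i, ∑ j, (Q i j : ℝ) * xx ^ ee m n i j =
          (∑ i, ∑ j, ((c i : ℝ) * b j) * xx ^ ee m n i j)
          - ∑ i, ∑ j, ((d j : ℝ) * a i) * xx ^ ee m n i j := by
        rw [← Finset.sum_sub_distrib]
        apply Finset.sum_congr rfl
        intro i _
        rw [← Finset.sum_sub_distrib]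
        apply Finset.sum_congr rfl
        intro j _
        simp only [hQdef]
        push_cast
        ring
      rw [hS]
      have hc0' : (c0 : ℝ) = (∑ i, (c i : ℝ)) * (∑ j, (b j : ℝ))
          - (∑ j, (d j : ℝ)) * (∑ i, (a i : ℝ)) := by
        rw [hc0]; push_cast; ring
      rw [hc0']
      linarith [h]

    have := (indep m n c0 Q hmain).2
    intro i j
    have hij := this i j
    have : (c i : ℚ) * b j - (d j : ℚ) * a i = 0 := hij
    linarith
  -- extract the rational ratio k
  obtain ⟨i0⟩ : Nonempty (Fin m) := ⟨⟨0, hm⟩⟩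
  obtain ⟨j0⟩ : Nonempty (Fin n) := ⟨⟨0, hn⟩⟩
  set k : ℚ := (d j0 : ℚ) / (b j0 : ℚ) with hk
  have hbj0 : ((b j0 : ℚ)) ≠ 0 := by
    exact_mod_cast (hb j0).ne'
  have hai0 : ((a i0 : ℚ)) ≠ 0 := by
    exact_mod_cast (ha i0).ne'
  have hci : ∀ i, (c i : ℚ) = k * a i := by
    intro i
    rw [hk, div_mul_eq_mul_div, eq_div_iff hbj0]
    linear_combination hQ i j0
  have hdj : ∀ j, (d j : ℚ) = k * b j := by
    intro j
    have h3 : ((d j : ℚ) * b j0) * a i0 = ((d j0 : ℚ) * b j) * a i0 := by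
      linear_combination ((b j : ℚ)) * hQ i0 j0 - ((b j0 : ℚ)) * hQ i0 j
    have h4 : (d j : ℚ) * b j0 = (d j0 : ℚ) * b j := mul_right_cancel₀ hai0 h3
    rw [hk, div_mul_eq_mul_div, eq_div_iff hbj0]
    linarith [h4]
  have key : ∀ (z : ℤ) (w : ℕ), 0 < w → (z : ℚ) = k * w → (k.den : ℤ) ∣ (w : ℤ) := by
    intro z w hw hzw
    have hwq : (((w : ℤ) : ℚ)) ≠ 0 := by exact_mod_cast hw.ne'
    have hkz : k = (Rat.divInt z (w : ℤ)) := by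
      rw [Rat.divInt_eq_div, eq_div_iff hwq]
      push_cast at hzw ⊢
      linarith [hzw]
    rw [hkz]
    exact Rat.den_dvd _ _
  have hden : ∀ i : Fin m, (k.den : ℤ) ∣ (a i : ℤ) := fun i => key (c i) (a i) (ha i) (hci i)
  have hdenb : ∀ j : Fin n, (k.den : ℤ) ∣ (b j : ℤ) := fun j => key (d j) (b j) (hb j) (hdj j)
  have hden1 : k.den = 1 := by
    by_contra hd
    have h1 : 1 < k.den := lt_of_le_of_ne k.pos (Ne.symm hd)
    exact hcop k.den h1 ⟨fun i => by exact_mod_cast hden i, fun j => by exact_mod_cast hdenb j⟩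
  refine ⟨k.num, fun i => ?_, fun j => ?_⟩
  · have := hci i
    have hkk : (k.num : ℚ) = k := (Rat.den_eq_one_iff k).mp hden1
    rw [← hkk] at this
    exact_mod_cast this
  · have := hdj j
    have hkk : (k.num : ℚ) = k := (Rat.den_eq_one_iff k).mp hden1
    rw [← hkk] at this
    exact_mod_cast this

noncomputable def Mon : AddSubmonoid ℝ :=
  AddSubmonoid.closure (Set.range (AA m n b) ∪ Set.range (BB m n a))

theorem AA_mem (i : Fin m) : AA m n b i ∈ Mon m n a b :=
  AddSubmonoid.subset_closure (Or.inl ⟨i, rfl⟩)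

theorem BB_mem (j : Fin n) : BB m n a j ∈ Mon m n a b :=
  AddSubmonoid.subset_closure (Or.inr ⟨j, rfl⟩)

noncomputable def alphaM (i : Fin m) : ↥(Mon m n a b) := ⟨AA m n b i, AA_mem m n a b i⟩

noncomputable def betaM (j : Fin n) : ↥(Mon m n a b) := ⟨BB m n a j, BB_mem m n a b j⟩

theorem AA_pos (hn : 0 < n) (hb : ∀ j, 0 < b j) (i : Fin m) : 0 < AA m n b i := by
  have h1 : (0:ℝ) < ∑ j, (b j : ℝ) := by
    apply Finset.sum_pos (fun j _ => by exact_mod_cast hb j)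
    exact ⟨⟨0, hn⟩, Finset.mem_univ _⟩
  have h2 : (0:ℝ) ≤ ∑ j, (b j : ℝ) * xx ^ ee m n i j :=
    Finset.sum_nonneg fun j _ => mul_nonneg (by positivity) (pow_nonneg xx_nonneg _)
  unfold AA
  linarith

theorem BB_pos (hm : 0 < m) (ha : ∀ i, 0 < a i) (j : Fin n) : 0 < BB m n a j := by
  have h1 : (0:ℝ) < ∑ i, (a i : ℝ) := by
    apply Finset.sum_pos (fun i _ => by exact_mod_cast ha i)
    exact ⟨⟨0, hm⟩, Finset.mem_univ _⟩
  have h2 : (0:ℝ) ≤ ∑ i, (a i : ℝ) * xx ^ ee m n i j :=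
    Finset.sum_nonneg fun i _ => mul_nonneg (by positivity) (pow_nonneg xx_nonneg _)
  unfold BB
  linarith

theorem mem_nonneg (hn : 0 < n) (hm : 0 < m) (ha : ∀ i, 0 < a i) (hb : ∀ j, 0 < b j) :
    ∀ z ∈ Mon m n a b, (0:ℝ) ≤ z := by
  intro z hz
  induction hz using AddSubmonoid.closure_induction with
  | mem x hx =>
      rcases hx with ⟨i, rfl⟩ | ⟨j, rfl⟩
      · exact (AA_pos m n b hn hb i).le
      · exact (BB_pos m n a hm ha j).le
  | zero => exact le_refl 0
  | add x y _ _ hx hy => linarith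

theorem mem_rep {z : ℝ} (hz : z ∈ Mon m n a b) :
    ∃ u : Fin m → ℕ, ∃ v : Fin n → ℕ,
      z = ∑ i, u i • AA m n b i + ∑ j, v j • BB m n a j := by
  classical
  induction hz using AddSubmonoid.closure_induction with
  | mem x hx =>
      rcases hx with ⟨i, rfl⟩ | ⟨j, rfl⟩
      · refine ⟨fun i' => if i' = i then 1 else 0, 0, ?_⟩
        simp [ite_smul]
      · refine ⟨0, fun j' => if j' = j then 1 else 0, ?_⟩
        simp [ite_smul]
  | zero => exact ⟨0, 0, by simp⟩
  | add x y _ _ hx hy =>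
      obtain ⟨u, v, rfl⟩ := hx
      obtain ⟨u', v', rfl⟩ := hy
      refine ⟨u + u', v + v', ?_⟩
      simp only [Pi.add_apply, add_smul, Finset.sum_add_distrib]
      ring

theorem rep_mem (u : Fin m → ℕ) (v : Fin n → ℕ) :
    (∑ i, u i • AA m n b i + ∑ j, v j • BB m n a j) ∈ Mon m n a b :=
  add_mem (sum_mem fun i _ => nsmul_mem (AA_mem m n a b i) _)
    (sum_mem fun j _ => nsmul_mem (BB_mem m n a b j) _)

theorem unit_iff (hn : 0 < n) (hm : 0 < m) (ha : ∀ i, 0 < a i) (hb : ∀ j, 0 < b j)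
    (y : ↥(Mon m n a b)) : IsAddUnit y ↔ (y : ℝ) = 0 := by
  constructor
  · intro hy
    obtain ⟨z, hz⟩ := isAddUnit_iff_exists_neg.mp hy
    have h0 : (y : ℝ) + (z : ℝ) = 0 := by
      have h := Subtype.ext_iff.mp hz
      push_cast at h
      exact h
    have h1 := mem_nonneg m n a b hn hm ha hb y y.2
    have h2 := mem_nonneg m n a b hn hm ha hb z z.2
    linarith
  · intro hy
    have : y = 0 := Subtype.ext hy
    rw [this]
    exact isAddUnit_zero

/-- The central counting lemma. -/
theorem counts_rel (hm : 0 < m) (hn : 0 < n) (ha : ∀ i, 0 < a i) (hb : ∀ j, 0 < b j)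
    (hcop : ∀ d : ℕ, 1 < d → ¬((∀ i, d ∣ a i) ∧ (∀ j, d ∣ b j)))
    (u u' : Fin m → ℕ) (v v' : Fin n → ℕ)
    (h : ∑ i, u i • AA m n b i + ∑ j, v j • BB m n a j
        = ∑ i, u' i • AA m n b i + ∑ j, v' j • BB m n a j) :
    ∃ k : ℤ, (∀ i, (u i : ℤ) = u' i + k * a i) ∧ (∀ j, (v' j : ℤ) = v j + k * b j) := by
  set c : Fin m → ℤ := fun i => (u i : ℤ) - u' i with hc
  set d : Fin n → ℤ := fun j => (v' j : ℤ) - v j with hd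
  have h' : ∑ i, (c i : ℝ) * AA m n b i = ∑ j, (d j : ℝ) * BB m n a j := by
    have e1 : ∑ i, (c i : ℝ) * AA m n b i
        = ∑ i, (u i : ℝ) * AA m n b i - ∑ i, (u' i : ℝ) * AA m n b i := by
      rw [← Finset.sum_sub_distrib]
      apply Finset.sum_congr rfl
      intro i _
      simp only [hc]
      push_cast
      ring
    have e2 : ∑ j, (d j : ℝ) * BB m n a j
        = ∑ j, (v' j : ℝ) * BB m n a j - ∑ j, (v j : ℝ) * BB m n a j := by
      rw [← Finset.sum_sub_distrib]
      apply Finset.sum_congr rfl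
      intro j _
      simp only [hd]
      push_cast
      ring
    simp only [nsmul_eq_mul] at h
    rw [e1, e2]
    linarith
  obtain ⟨k, hk1, hk2⟩ := KL m n a b hm hn ha hb hcop c d h'
  refine ⟨k, fun i => ?_, fun j => ?_⟩
  · have := hk1 i
    simp only [hc] at this
    linarith
  · have := hk2 j
    simp only [hd] at this
    linarith

theorem sumA_single (i : Fin m) :
    ∑ i', (if i' = i then 1 else 0 : ℕ) • AA m n b i' = AA m n b i := by
  simp [ite_smul]

theorem sumB_single (j : Fin n) :
    ∑ j', (if j' = j then 1 else 0 : ℕ) • BB m n a j' = BB m n a j := by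
  simp [ite_smul]

theorem exists_ne_index {p : ℕ} (hp : 0 < p) (hp1 : p ≠ 1) (i : Fin p) :
    ∃ i' : Fin p, i' ≠ i := by
  refine ⟨if h : i.val = 0 then ⟨1, by omega⟩ else ⟨0, by omega⟩, ?_⟩
  split_ifs with h <;> (intro hc; rw [Fin.ext_iff] at hc; simp at hc; omega)


theorem msum_sum {γ M' : Type*} [AddCommMonoid M'] (s : Finset γ) (f : γ → Multiset M') :
    (∑ i ∈ s, f i).sum = ∑ i ∈ s, (f i).sum := by
  classical
  induction s using Finset.induction_on with
  | empty => simp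
  | insert _ _ hnotmem ih => simp [Finset.sum_insert hnotmem, Multiset.sum_add, ih]

theorem mcard_sum {γ M' : Type*} (s : Finset γ) (f : γ → Multiset M') :
    Multiset.card (∑ i ∈ s, f i) = ∑ i ∈ s, Multiset.card (f i) := by
  classical
  induction s using Finset.induction_on with
  | empty => simp
  | insert _ _ hnotmem ih => simp [Finset.sum_insert hnotmem, ih]

theorem smul_singleton_sum {M' : Type*} [AddCommMonoid M'] (x : M') (k : ℕ) :
    (k • ({x} : Multiset M')).sum = k • x := by
  rw [Multiset.nsmul_singleton, Multiset.sum_replicate]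

section Main

variable (hm : 0 < m) (hn : 0 < n) (ha : ∀ i, 0 < a i) (hb : ∀ j, 0 < b j)
  (hcop : ∀ d : ℕ, 1 < d → ¬((∀ i, d ∣ a i) ∧ (∀ j, d ∣ b j)))
  (ha1 : m = 1 → ∀ i, a i ≠ 1) (hb1 : n = 1 → ∀ j, b j ≠ 1)

include hm hn ha hb hcop

theorem AA_inj {i i' : Fin m} (h : AA m n b i = AA m n b i') : i = i' := by
  classical
  have heq : ∑ i'', (if i'' = i then 1 else 0 : ℕ) • AA m n b i'' + ∑ j, (0:ℕ) • BB m n a j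
      = ∑ i'', (if i'' = i' then 1 else 0 : ℕ) • AA m n b i'' + ∑ j, (0:ℕ) • BB m n a j := by
    rw [sumA_single, sumA_single, h]
  obtain ⟨k, hk1, hk2⟩ := counts_rel m n a b hm hn ha hb hcop _ _ _ _ heq
  have hj0 := hk2 ⟨0, hn⟩
  have hbpos : (0:ℤ) < b ⟨0, hn⟩ := by exact_mod_cast hb ⟨0, hn⟩
  have hk0 : k = 0 := by
    simp only [Nat.cast_zero] at hj0
    by_contra hk0
    rcases lt_or_gt_of_ne hk0 with h' | h' <;> nlinarith
  have := hk1 i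
  rw [hk0] at this
  simp at this
  by_contra hne
  simp [hne] at this

theorem BB_inj {j j' : Fin n} (h : BB m n a j = BB m n a j') : j = j' := by
  classical
  have heq : ∑ i, (0:ℕ) • AA m n b i + ∑ j'', (if j'' = j' then 1 else 0 : ℕ) • BB m n a j''
      = ∑ i, (0:ℕ) • AA m n b i + ∑ j'', (if j'' = j then 1 else 0 : ℕ) • BB m n a j'' := by
    rw [sumB_single, sumB_single, h]
  obtain ⟨k, hk1, hk2⟩ := counts_rel m n a b hm hn ha hb hcop _ _ _ _ heq
  have hi0 := hk1 ⟨0, hm⟩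
  have hapos : (0:ℤ) < a ⟨0, hm⟩ := by exact_mod_cast ha ⟨0, hm⟩
  have hk0 : k = 0 := by
    simp only [Nat.cast_zero] at hi0
    by_contra hk0
    rcases lt_or_gt_of_ne hk0 with h' | h' <;> nlinarith
  have := hk2 j
  rw [hk0] at this
  simp at this
  by_contra hne
  simp [hne] at this

include ha1 in
theorem AB_ne (i : Fin m) (j : Fin n) : AA m n b i ≠ BB m n a j := by
  classical
  intro h
  have heq : ∑ i'', (if i'' = i then 1 else 0 : ℕ) • AA m n b i'' + ∑ j', (0:ℕ) • BB m n a j'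
      = ∑ i'', (0:ℕ) • AA m n b i'' + ∑ j'', (if j'' = j then 1 else 0 : ℕ) • BB m n a j'' := by
    rw [sumA_single, sumB_single, h]
    simp
  obtain ⟨k, hk1, hk2⟩ := counts_rel m n a b hm hn ha hb hcop _ _ _ _ heq
  have hi := hk1 i
  simp at hi
  -- hi : 1 = k * a i  (as integers)
  by_cases hm1 : m = 1
  · have h1 : k * (a i : ℤ) = 1 := by linarith
    rcases Int.mul_eq_one_iff_eq_one_or_neg_one.mp h1 with ⟨_, h2⟩ | ⟨_, h2⟩
    · have : a i = 1 := by exact_mod_cast h2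
      exact ha1 hm1 i this
    · have : (0:ℤ) < a i := by exact_mod_cast ha i
      omega
  · obtain ⟨i', hi'⟩ := exists_ne_index hm hm1 i
    have h2 := hk1 i'
    rw [if_neg hi'] at h2
    simp at h2
    rcases h2 with h2 | h2
    · rw [h2] at hi
      simp at hi
    · exact absurd h2 (ha i').ne'

theorem combo_eq_zero (u : Fin m → ℕ) (v : Fin n → ℕ)
    (h : ∑ i, u i • AA m n b i + ∑ j, v j • BB m n a j = 0) :
    (∀ i, u i = 0) ∧ (∀ j, v j = 0) := by
  have hA : ∀ i ∈ Finset.univ, (0:ℝ) ≤ u i • AA m n b i :=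
    fun i _ => nsmul_nonneg (AA_pos m n b hn hb i).le _
  have hB : ∀ j ∈ Finset.univ, (0:ℝ) ≤ v j • BB m n a j :=
    fun j _ => nsmul_nonneg (BB_pos m n a hm ha j).le _
  have h1 : (0:ℝ) ≤ ∑ i, u i • AA m n b i := Finset.sum_nonneg hA
  have h2 : (0:ℝ) ≤ ∑ j, v j • BB m n a j := Finset.sum_nonneg hB
  have hA0 : ∑ i, u i • AA m n b i = 0 := by linarith
  have hB0 : ∑ j, v j • BB m n a j = 0 := by linarith
  constructor
  · intro i
    have := (Finset.sum_eq_zero_iff_of_nonneg hA).mp hA0 i (Finset.mem_univ i)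
    have hpos := AA_pos m n b hn hb i
    rw [nsmul_eq_mul] at this
    rcases mul_eq_zero.mp this with h' | h'
    · exact_mod_cast h'
    · exact absurd h' hpos.ne'
  · intro j
    have := (Finset.sum_eq_zero_iff_of_nonneg hB).mp hB0 j (Finset.mem_univ j)
    have hpos := BB_pos m n a hm ha j
    rw [nsmul_eq_mul] at this
    rcases mul_eq_zero.mp this with h' | h'
    · exact_mod_cast h'
    · exact absurd h' hpos.ne'

theorem split_off_A (u : Fin m → ℕ) (i1 : Fin m) (h1 : 1 ≤ u i1) :
    ∑ i, u i • AA m n b i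
      = AA m n b i1 + ∑ i, (u i - if i = i1 then 1 else 0) • AA m n b i := by
  classical
  have : ∀ i, u i = (u i - if i = i1 then 1 else 0) + (if i = i1 then 1 else 0) := by
    intro i
    split_ifs with h <;> simp_all <;> omega
  calc ∑ i, u i • AA m n b i
      = ∑ i, ((u i - if i = i1 then 1 else 0) + (if i = i1 then 1 else 0)) • AA m n b i := by
        apply Finset.sum_congr rfl
        intro i _
        rw [← this i]
    _ = ∑ i, (u i - if i = i1 then 1 else 0) • AA m n b i
        + ∑ i, (if i = i1 then 1 else 0 : ℕ) • AA m n b i := by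
        simp only [add_smul, Finset.sum_add_distrib]
    _ = AA m n b i1 + ∑ i, (u i - if i = i1 then 1 else 0) • AA m n b i := by
        rw [sumA_single]
        ring

theorem split_off_B (v : Fin n → ℕ) (j1 : Fin n) (h1 : 1 ≤ v j1) :
    ∑ j, v j • BB m n a j
      = BB m n a j1 + ∑ j, (v j - if j = j1 then 1 else 0) • BB m n a j := by
  classical
  have : ∀ j, v j = (v j - if j = j1 then 1 else 0) + (if j = j1 then 1 else 0) := by
    intro j
    split_ifs with h <;> simp_all <;> omega
  calc ∑ j, v j • BB m n a j
      = ∑ j, ((v j - if j = j1 then 1 else 0) + (if j = j1 then 1 else 0)) • BB m n a j := by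
        apply Finset.sum_congr rfl
        intro j _
        rw [← this j]
    _ = ∑ j, (v j - if j = j1 then 1 else 0) • BB m n a j
        + ∑ j, (if j = j1 then 1 else 0 : ℕ) • BB m n a j := by
        simp only [add_smul, Finset.sum_add_distrib]
    _ = BB m n a j1 + ∑ j, (v j - if j = j1 then 1 else 0) • BB m n a j := by
        rw [sumB_single]
        ring

include ha1 in
theorem atom_alpha (i : Fin m) : IsAddAtom (alphaM m n a b i) := by
  classical
  constructor
  · rw [unit_iff m n a b hn hm ha hb]
    exact (AA_pos m n b hn hb i).ne'
  · intro y z hyz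
    by_contra hcon
    push_neg at hcon
    obtain ⟨hy, hz⟩ := hcon
    rw [unit_iff m n a b hn hm ha hb] at hy hz
    obtain ⟨u, v, huv⟩ := mem_rep m n a b y.2
    obtain ⟨u', v', huv'⟩ := mem_rep m n a b z.2
    have hreal : AA m n b i = (y : ℝ) + (z : ℝ) := by
      have := Subtype.ext_iff.mp hyz
      push_cast at this
      exact this
    have heq : ∑ i'', (if i'' = i then 1 else 0:ℕ) • AA m n b i'' + ∑ j, (0:ℕ) • BB m n a j
        = ∑ i'', (u i'' + u' i'') • AA m n b i'' + ∑ j, (v j + v' j) • BB m n a j := by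
      rw [sumA_single]
      simp only [add_smul, Finset.sum_add_distrib, zero_smul, Finset.sum_const_zero, add_zero]
      rw [hreal, huv, huv']
      ring
    obtain ⟨k, hk1, hk2⟩ := counts_rel m n a b hm hn ha hb hcop _ _ _ _ heq
    rcases lt_trichotomy k 0 with hk | hk | hk
    · have h5 := hk2 ⟨0, hn⟩
      have hbp : (1:ℤ) ≤ b ⟨0, hn⟩ := by exact_mod_cast hb ⟨0, hn⟩
      push_cast at h5
      nlinarith [Int.natCast_nonneg (v ⟨0, hn⟩), Int.natCast_nonneg (v' ⟨0, hn⟩)]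
    · -- k = 0 : indicator = u + u', 0 = v + v'
      subst hk
      have hu : ∀ i'', u i'' + u' i'' = if i'' = i then 1 else 0 := by
        intro i''
        have h5 := hk1 i''
        by_cases hii : i'' = i
        · rw [if_pos hii] at h5 ⊢
          push_cast at h5
          omega
        · rw [if_neg hii] at h5 ⊢
          push_cast at h5
          omega
      have hv : ∀ j, v j + v' j = 0 := by
        intro j
        have h5 := hk2 j
        push_cast at h5
        omega
      rcases Nat.eq_zero_or_pos (u i) with h0 | h1
      · apply hy
        rw [huv]
        have e1 : ∑ i'', u i'' • AA m n b i'' = 0 := by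
          apply Finset.sum_eq_zero
          intro i'' _
          have hui : u i'' = 0 := by
            have h5 := hu i''
            by_cases hii : i'' = i
            · subst hii; exact h0
            · rw [if_neg hii] at h5; omega
          rw [hui, zero_smul]
        have e2 : ∑ j, v j • BB m n a j = 0 := by
          apply Finset.sum_eq_zero
          intro j _
          have : v j = 0 := by have := hv j; omega
          rw [this, zero_smul]
        rw [e1, e2, add_zero]
      · apply hz
        rw [huv']
        have e1 : ∑ i'', u' i'' • AA m n b i'' = 0 := by
          apply Finset.sum_eq_zero
          intro i'' _
          have hui : u' i'' = 0 := by
            have h5 := hu i''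
            by_cases hii : i'' = i
            · subst hii; rw [if_pos rfl] at h5; omega
            · rw [if_neg hii] at h5; omega
          rw [hui, zero_smul]
        have e2 : ∑ j, v' j • BB m n a j = 0 := by
          apply Finset.sum_eq_zero
          intro j _
          have : v' j = 0 := by have := hv j; omega
          rw [this, zero_smul]
        rw [e1, e2, add_zero]
    · -- k ≥ 1
      by_cases hm1 : m = 1
      · have hone := hk1 i
        rw [if_pos rfl] at hone
        have ha2 : 2 ≤ a i := by
          have := ha1 hm1 i
          have := ha i
          omega
        have h2 : (2:ℤ) ≤ a i := by exact_mod_cast ha2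
        push_cast at hone
        nlinarith [Int.natCast_nonneg (u i), Int.natCast_nonneg (u' i)]
      · obtain ⟨i', hi'⟩ := exists_ne_index hm hm1 i
        have hzero := hk1 i'
        rw [if_neg hi'] at hzero
        have hap : (1:ℤ) ≤ a i' := by exact_mod_cast ha i'
        push_cast at hzero
        nlinarith [Int.natCast_nonneg (u i'), Int.natCast_nonneg (u' i')]

include hb1 in
theorem atom_beta (j : Fin n) : IsAddAtom (betaM m n a b j) := by
  classical
  constructor
  · rw [unit_iff m n a b hn hm ha hb]
    exact (BB_pos m n a hm ha j).ne'
  · intro y z hyz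
    by_contra hcon
    push_neg at hcon
    obtain ⟨hy, hz⟩ := hcon
    rw [unit_iff m n a b hn hm ha hb] at hy hz
    obtain ⟨u, v, huv⟩ := mem_rep m n a b y.2
    obtain ⟨u', v', huv'⟩ := mem_rep m n a b z.2
    have hreal : BB m n a j = (y : ℝ) + (z : ℝ) := by
      have := Subtype.ext_iff.mp hyz
      push_cast at this
      exact this
    have heq : ∑ i'', (u i'' + u' i'') • AA m n b i'' + ∑ j'', (v j'' + v' j'') • BB m n a j''
        = ∑ i'', (0:ℕ) • AA m n b i'' + ∑ j'', (if j'' = j then 1 else 0:ℕ) • BB m n a j'' := by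
      rw [sumB_single]
      simp only [add_smul, Finset.sum_add_distrib, zero_smul, Finset.sum_const_zero, zero_add]
      rw [hreal, huv, huv']
      ring
    obtain ⟨k, hk1, hk2⟩ := counts_rel m n a b hm hn ha hb hcop _ _ _ _ heq
    -- hk1 : (u+u') i = 0 + k * a i ; hk2 : indicator j'' = (v+v') j'' + k * b j''
    rcases lt_trichotomy k 0 with hk | hk | hk
    · -- then u+u' at i0 is negative
      have h5 := hk1 ⟨0, hm⟩
      have hap : (1:ℤ) ≤ a ⟨0, hm⟩ := by exact_mod_cast ha ⟨0, hm⟩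
      push_cast at h5
      nlinarith [Int.natCast_nonneg (u ⟨0, hm⟩), Int.natCast_nonneg (u' ⟨0, hm⟩)]
    · subst hk
      have hu : ∀ i'', u i'' + u' i'' = 0 := by
        intro i''
        have h5 := hk1 i''
        push_cast at h5
        omega
      have hv : ∀ j'', v j'' + v' j'' = if j'' = j then 1 else 0 := by
        intro j''
        have h5 := hk2 j''
        by_cases hjj : j'' = j
        · rw [if_pos hjj] at h5 ⊢
          push_cast at h5
          omega
        · rw [if_neg hjj] at h5 ⊢
          push_cast at h5
          omega
      rcases Nat.eq_zero_or_pos (v j) with h0 | h1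
      · apply hy
        rw [huv]
        have e1 : ∑ i'', u i'' • AA m n b i'' = 0 := by
          apply Finset.sum_eq_zero
          intro i'' _
          have : u i'' = 0 := by have := hu i''; omega
          rw [this, zero_smul]
        have e2 : ∑ j'', v j'' • BB m n a j'' = 0 := by
          apply Finset.sum_eq_zero
          intro j'' _
          have hvj : v j'' = 0 := by
            have h5 := hv j''
            by_cases hjj : j'' = j
            · subst hjj; exact h0
            · rw [if_neg hjj] at h5; omega
          rw [hvj, zero_smul]
        rw [e1, e2, add_zero]
      · apply hz
        rw [huv']
        have e1 : ∑ i'', u' i'' • AA m n b i'' = 0 := by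
          apply Finset.sum_eq_zero
          intro i'' _
          have : u' i'' = 0 := by have := hu i''; omega
          rw [this, zero_smul]
        have e2 : ∑ j'', v' j'' • BB m n a j'' = 0 := by
          apply Finset.sum_eq_zero
          intro j'' _
          have hvj : v' j'' = 0 := by
            have h5 := hv j''
            by_cases hjj : j'' = j
            · subst hjj; rw [if_pos rfl] at h5; omega
            · rw [if_neg hjj] at h5; omega
          rw [hvj, zero_smul]
        rw [e1, e2, add_zero]
    · -- k ≥ 1 : from hk2, at j : 1 = (v+v') j + k b j; if n = 1 then b j ≥ 2 contra, else other j' gives 0 ≥ k b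
      by_cases hn1 : n = 1
      · have hone := hk2 j
        rw [if_pos rfl] at hone
        have hb2 : 2 ≤ b j := by
          have := hb1 hn1 j
          have := hb j
          omega
        have h2 : (2:ℤ) ≤ b j := by exact_mod_cast hb2
        push_cast at hone
        nlinarith [Int.natCast_nonneg (v j), Int.natCast_nonneg (v' j)]
      · obtain ⟨j', hj'⟩ := exists_ne_index hn hn1 j
        have hzero := hk2 j'
        rw [if_neg hj'] at hzero
        have hbp : (1:ℤ) ≤ b j' := by exact_mod_cast hb j'
        push_cast at hzero
        nlinarith [Int.natCast_nonneg (v j'), Int.natCast_nonneg (v' j')]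

theorem atom_classify (y : ↥(Mon m n a b)) (hy : IsAddAtom y) :
    (∃ i, y = alphaM m n a b i) ∨ (∃ j, y = betaM m n a b j) := by
  classical
  have hy0 : (y : ℝ) ≠ 0 := by
    intro h
    exact hy.1 ((unit_iff m n a b hn hm ha hb y).mpr h)
  obtain ⟨u, v, huv⟩ := mem_rep m n a b y.2
  by_cases hA : ∃ i1, 1 ≤ u i1
  · obtain ⟨i1, hi1⟩ := hA
    left
    refine ⟨i1, ?_⟩
    set w : ↥(Mon m n a b) :=
      ⟨∑ i, (u i - if i = i1 then 1 else 0) • AA m n b i + ∑ j, v j • BB m n a j,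
        rep_mem m n a b _ _⟩ with hw
    have hsplit : y = alphaM m n a b i1 + w := by
      apply Subtype.ext
      push_cast
      rw [huv, split_off_A m n a b hm hn ha hb hcop u i1 hi1]
      show _ = AA m n b i1 + _
      ring
    rcases hy.2 _ _ hsplit with hu | hu
    · exact absurd ((unit_iff m n a b hn hm ha hb _).mp hu) (AA_pos m n b hn hb i1).ne'
    · have hw0 : (w : ℝ) = 0 := (unit_iff m n a b hn hm ha hb w).mp hu
      have hz := combo_eq_zero m n a b hm hn ha hb hcop _ _ hw0
      apply Subtype.ext
      rw [huv]
      have e1 : ∀ i, u i = if i = i1 then 1 else 0 := by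
        intro i
        have := hz.1 i
        by_cases hii : i = i1
        · rw [if_pos hii]
          rw [if_pos hii] at this
          subst hii
          omega
        · rw [if_neg hii]
          rw [if_neg hii] at this
          omega
      calc ∑ i, u i • AA m n b i + ∑ j, v j • BB m n a j
          = ∑ i, (if i = i1 then 1 else 0 : ℕ) • AA m n b i + ∑ j, (0:ℕ) • BB m n a j := by
            congr 1
            · exact Finset.sum_congr rfl fun i _ => by rw [e1 i]
            · exact Finset.sum_congr rfl fun j _ => by rw [hz.2 j]
        _ = AA m n b i1 := by rw [sumA_single]; simp
  · push_neg at hA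
    have hu0 : ∀ i, u i = 0 := fun i => by have := hA i; omega
    have hB : ∃ j1, 1 ≤ v j1 := by
      by_contra hB
      push_neg at hB
      apply hy0
      rw [huv]
      have e1 : ∑ i, u i • AA m n b i = 0 :=
        Finset.sum_eq_zero fun i _ => by rw [hu0 i, zero_smul]
      have e2 : ∑ j, v j • BB m n a j = 0 :=
        Finset.sum_eq_zero fun j _ => by
          have : v j = 0 := by have := hB j; omega
          rw [this, zero_smul]
      rw [e1, e2, add_zero]
    obtain ⟨j1, hj1⟩ := hB
    right
    refine ⟨j1, ?_⟩
    set w : ↥(Mon m n a b) :=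
      ⟨∑ i, u i • AA m n b i + ∑ j, (v j - if j = j1 then 1 else 0) • BB m n a j,
        rep_mem m n a b _ _⟩ with hw
    have hsplit : y = betaM m n a b j1 + w := by
      apply Subtype.ext
      push_cast
      rw [huv, split_off_B m n a b hm hn ha hb hcop v j1 hj1]
      show _ = BB m n a j1 + _
      ring
    rcases hy.2 _ _ hsplit with hu | hu
    · exact absurd ((unit_iff m n a b hn hm ha hb _).mp hu) (BB_pos m n a hm ha j1).ne'
    · have hw0 : (w : ℝ) = 0 := (unit_iff m n a b hn hm ha hb w).mp hu
      have hz := combo_eq_zero m n a b hm hn ha hb hcop _ _ hw0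
      apply Subtype.ext
      rw [huv]
      have e1 : ∀ j, v j = if j = j1 then 1 else 0 := by
        intro j
        have := hz.2 j
        by_cases hjj : j = j1
        · rw [if_pos hjj]
          rw [if_pos hjj] at this
          subst hjj
          omega
        · rw [if_neg hjj]
          rw [if_neg hjj] at this
          omega
      calc ∑ i, u i • AA m n b i + ∑ j, v j • BB m n a j
          = ∑ i, (0:ℕ) • AA m n b i + ∑ j, (if j = j1 then 1 else 0 : ℕ) • BB m n a j := by
            congr 1
            · exact Finset.sum_congr rfl fun i _ => by rw [hu0 i]
            · exact Finset.sum_congr rfl fun j _ => by rw [e1 j]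
        _ = BB m n a j1 := by rw [sumB_single]; simp

noncomputable def canon (u : Fin m → ℕ) (v : Fin n → ℕ) : Multiset ↥(Mon m n a b) :=
  ∑ i, u i • ({alphaM m n a b i} : Multiset _) + ∑ j, v j • ({betaM m n a b j} : Multiset _)

omit hm hn ha hb hcop in
theorem canon_sum (u : Fin m → ℕ) (v : Fin n → ℕ) :
    ((canon m n a b u v).sum : ℝ) = ∑ i, u i • AA m n b i + ∑ j, v j • BB m n a j := by
  unfold canon
  rw [Multiset.sum_add, msum_sum, msum_sum]
  push_cast
  congr 1
  · apply Finset.sum_congr rfl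
    intro i _
    rw [Multiset.map_nsmul, Multiset.map_singleton, Multiset.nsmul_singleton,
      Multiset.sum_replicate]
    rfl
  · apply Finset.sum_congr rfl
    intro j _
    rw [Multiset.map_nsmul, Multiset.map_singleton, Multiset.nsmul_singleton,
      Multiset.sum_replicate]
    rfl

omit hm hn ha hb hcop in
theorem canon_card (u : Fin m → ℕ) (v : Fin n → ℕ) :
    Multiset.card (canon m n a b u v) = ∑ i, u i + ∑ j, v j := by
  unfold canon
  rw [Multiset.card_add, mcard_sum, mcard_sum]
  congr 1
  · apply Finset.sum_congr rfl
    intro i _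
    rw [Multiset.card_nsmul]
    simp
  · apply Finset.sum_congr rfl
    intro j _
    rw [Multiset.card_nsmul]
    simp

omit hm hn ha hb hcop in
theorem canon_mem (u : Fin m → ℕ) (v : Fin n → ℕ) {y : ↥(Mon m n a b)}
    (hy : y ∈ canon m n a b u v) :
    (∃ i, y = alphaM m n a b i) ∨ (∃ j, y = betaM m n a b j) := by
  unfold canon at hy
  rw [Multiset.mem_add] at hy
  rcases hy with hy | hy
  · rw [Multiset.mem_sum] at hy
    obtain ⟨i, _, hy⟩ := hy
    rw [Multiset.nsmul_singleton] at hy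
    exact Or.inl ⟨i, Multiset.eq_of_mem_replicate hy⟩
  · rw [Multiset.mem_sum] at hy
    obtain ⟨j, _, hy⟩ := hy
    rw [Multiset.nsmul_singleton] at hy
    exact Or.inr ⟨j, Multiset.eq_of_mem_replicate hy⟩

include ha1 in
theorem count_alpha [DecidableEq ↥(Mon m n a b)] (u : Fin m → ℕ) (v : Fin n → ℕ) (i : Fin m) :
    Multiset.count (alphaM m n a b i) (canon m n a b u v) = u i := by
  unfold canon
  rw [Multiset.count_add, Multiset.count_sum', Multiset.count_sum']
  have e1 : ∀ i' : Fin m, Multiset.count (alphaM m n a b i) (u i' • {alphaM m n a b i'})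
      = if i' = i then u i' else 0 := by
    intro i'
    rw [Multiset.nsmul_singleton, Multiset.count_replicate]
    by_cases hii : i' = i
    · subst hii; simp
    · rw [if_neg hii, if_neg]
      intro hc
      exact hii (AA_inj m n a b hm hn ha hb hcop (Subtype.ext_iff.mp hc))
  have e2 : ∀ j : Fin n, Multiset.count (alphaM m n a b i) (v j • {betaM m n a b j}) = 0 := by
    intro j
    rw [Multiset.nsmul_singleton, Multiset.count_replicate, if_neg]
    intro hc
    exact AB_ne m n a b hm hn ha hb hcop ha1 i j ((Subtype.ext_iff.mp hc)).symm
  rw [Finset.sum_congr rfl fun i' _ => e1 i', Finset.sum_congr rfl fun j _ => e2 j]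
  simp

include ha1 in
theorem count_beta [DecidableEq ↥(Mon m n a b)] (u : Fin m → ℕ) (v : Fin n → ℕ) (j : Fin n) :
    Multiset.count (betaM m n a b j) (canon m n a b u v) = v j := by
  unfold canon
  rw [Multiset.count_add, Multiset.count_sum', Multiset.count_sum']
  have e1 : ∀ i : Fin m, Multiset.count (betaM m n a b j) (u i • {alphaM m n a b i}) = 0 := by
    intro i
    rw [Multiset.nsmul_singleton, Multiset.count_replicate, if_neg]
    intro hc
    exact AB_ne m n a b hm hn ha hb hcop ha1 i j (Subtype.ext_iff.mp hc)
  have e2 : ∀ j' : Fin n, Multiset.count (betaM m n a b j) (v j' • {betaM m n a b j'})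
      = if j' = j then v j' else 0 := by
    intro j'
    rw [Multiset.nsmul_singleton, Multiset.count_replicate]
    by_cases hjj : j' = j
    · subst hjj; simp
    · rw [if_neg hjj, if_neg]
      intro hc
      exact hjj (BB_inj m n a b hm hn ha hb hcop (Subtype.ext_iff.mp hc))
  rw [Finset.sum_congr rfl fun i _ => e1 i, Finset.sum_congr rfl fun j' _ => e2 j']
  simp

include hb1 in
theorem factor_canon (z : Multiset ↥(Mon m n a b)) (hz : ∀ y ∈ z, IsAddAtom y) :
    ∃ u v, z = canon m n a b u v := by
  classical
  induction z using Multiset.induction_on with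
  | empty =>
      refine ⟨0, 0, ?_⟩
      unfold canon
      simp
  | cons y t ih =>
      obtain ⟨u, v, hu⟩ := ih fun y' hy' => hz y' (Multiset.mem_cons_of_mem hy')
      have hy := hz y (Multiset.mem_cons_self y t)
      rcases atom_classify m n a b hm hn ha hb hcop y hy with ⟨i1, rfl⟩ | ⟨j1, rfl⟩
      · refine ⟨fun i => u i + (if i = i1 then 1 else 0), v, ?_⟩
        unfold canon at hu ⊢
        rw [Finset.sum_congr rfl (fun i (_ : i ∈ Finset.univ) =>
          (add_smul (u i) (if i = i1 then 1 else 0) ({alphaM m n a b i} : Multiset _)))]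
        rw [Finset.sum_add_distrib]
        have : ∑ i, (if i = i1 then 1 else 0 : ℕ) • ({alphaM m n a b i} : Multiset _)
            = {alphaM m n a b i1} := by
          simp [ite_smul]
        rw [this, hu, ← Multiset.singleton_add]
        abel
      · refine ⟨u, fun j => v j + (if j = j1 then 1 else 0), ?_⟩
        unfold canon at hu ⊢
        rw [Finset.sum_congr rfl (fun j (_ : j ∈ Finset.univ) =>
          (add_smul (v j) (if j = j1 then 1 else 0) ({betaM m n a b j} : Multiset _)))]
        rw [Finset.sum_add_distrib]
        have : ∑ j, (if j = j1 then 1 else 0 : ℕ) • ({betaM m n a b j} : Multiset _)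
            = {betaM m n a b j1} := by
          simp [ite_smul]
        rw [this, hu, ← Multiset.singleton_add]
        abel

omit hm hn ha hb hcop in
theorem coe_comboM (u : Fin m → ℕ) (v : Fin n → ℕ) :
    ((∑ i, u i • alphaM m n a b i + ∑ j, v j • betaM m n a b j : ↥(Mon m n a b)) : ℝ)
      = ∑ i, u i • AA m n b i + ∑ j, v j • BB m n a j := by
  push_cast
  rfl

omit hm hn ha hb hcop in
theorem master_real : ∑ i, a i • AA m n b i = ∑ j, b j • BB m n a j := by
  simp only [nsmul_eq_mul]
  rw [expandA m n b (fun i => (a i : ℝ)), expandB m n a (fun j => (b j : ℝ))]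
  congr 1
  · ring
  · apply Finset.sum_congr rfl
    intro i _
    apply Finset.sum_congr rfl
    intro j _
    ring

theorem masterM : ∑ i, a i • alphaM m n a b i = ∑ j, b j • betaM m n a b j := by
  apply Subtype.ext
  have h1 := coe_comboM m n a b a 0
  have h2 := coe_comboM m n a b 0 b
  simp only [Pi.zero_apply, zero_smul, Finset.sum_const_zero, add_zero, zero_add] at h1 h2
  rw [h1, h2]
  exact master_real m n a b

omit hcop in
theorem sum_eq_int {ι : Type*} [Fintype ι] (u u' w : ι → ℕ) (k : ℤ)
    (h : ∀ i, (u i : ℤ) = u' i + k * w i) :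
    (∑ i, (u i : ℤ)) = ∑ i, (u' i : ℤ) + k * ∑ i, (w i : ℤ) := by
  rw [Finset.mul_sum, ← Finset.sum_add_distrib]
  exact Finset.sum_congr rfl fun i _ => h i

theorem no_dvd_alpha (i0 : Fin m) (v : Fin n → ℕ) (hv : ∀ j, v j ≤ b j)
    (hj : ∃ j, v j ≠ b j) :
    ¬ AddDvd (alphaM m n a b i0) (∑ j, v j • betaM m n a b j) := by
  classical
  rintro ⟨c, hc⟩
  obtain ⟨u', v', hc'⟩ := mem_rep m n a b c.2
  have hreal : ∑ j, v j • BB m n a j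
      = AA m n b i0 + (∑ i, u' i • AA m n b i + ∑ j, v' j • BB m n a j) := by
    have h1 := Subtype.ext_iff.mp hc
    push_cast at h1
    rw [hc'] at h1
    exact h1
  have heq : ∑ i, (0:ℕ) • AA m n b i + ∑ j, v j • BB m n a j
      = ∑ i, ((if i = i0 then 1 else 0) + u' i) • AA m n b i + ∑ j, v' j • BB m n a j := by
    simp only [zero_smul, Finset.sum_const_zero, zero_add, add_smul, Finset.sum_add_distrib]
    rw [sumA_single]
    rw [hreal]
    ring
  obtain ⟨k, hk1, hk2⟩ := counts_rel m n a b hm hn ha hb hcop _ _ _ _ heq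
  have hki0 := hk1 i0
  rw [if_pos rfl] at hki0
  push_cast at hki0
  have hai0 : (1:ℤ) ≤ a i0 := by exact_mod_cast ha i0
  have hkneg : k ≤ -1 := by
    by_contra hk0
    push_neg at hk0
    have hk0' : 0 ≤ k := by omega
    nlinarith [Int.natCast_nonneg (u' i0), mul_nonneg hk0' (by linarith : (0:ℤ) ≤ (a i0 : ℤ))]
  have hvb : ∀ j, v j = b j := by
    intro j
    have h5 := hk2 j
    have hbj : (1:ℤ) ≤ b j := by exact_mod_cast hb j
    have hge : (b j : ℤ) ≤ v j := by
      nlinarith [Int.natCast_nonneg (v' j)]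
    have := hv j
    omega
  obtain ⟨j, hjne⟩ := hj
  exact hjne (hvb j)

theorem no_dvd_beta (j0 : Fin n) (u : Fin m → ℕ) (hu : ∀ i, u i ≤ a i)
    (hi : ∃ i, u i ≠ a i) :
    ¬ AddDvd (betaM m n a b j0) (∑ i, u i • alphaM m n a b i) := by
  classical
  rintro ⟨c, hc⟩
  obtain ⟨u', v', hc'⟩ := mem_rep m n a b c.2
  have hreal : ∑ i, u i • AA m n b i
      = BB m n a j0 + (∑ i, u' i • AA m n b i + ∑ j, v' j • BB m n a j) := by
    have h1 := Subtype.ext_iff.mp hc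
    push_cast at h1
    rw [hc'] at h1
    exact h1
  have heq : ∑ i, u i • AA m n b i + ∑ j, (0:ℕ) • BB m n a j
      = ∑ i, u' i • AA m n b i + ∑ j, ((if j = j0 then 1 else 0) + v' j) • BB m n a j := by
    simp only [zero_smul, Finset.sum_const_zero, add_zero, add_smul, Finset.sum_add_distrib]
    rw [sumB_single]
    rw [hreal]
    ring
  obtain ⟨k, hk1, hk2⟩ := counts_rel m n a b hm hn ha hb hcop _ _ _ _ heq
  have hkj0 := hk2 j0
  rw [if_pos rfl] at hkj0
  push_cast at hkj0
  have hbj0 : (1:ℤ) ≤ b j0 := by exact_mod_cast hb j0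
  have hkpos : 1 ≤ k := by
    by_contra hk0
    push_neg at hk0
    have hk0' : k ≤ 0 := by omega
    nlinarith [Int.natCast_nonneg (v' j0), mul_nonpos_of_nonpos_of_nonneg hk0'
      (by linarith : (0:ℤ) ≤ (b j0 : ℤ))]
  have hua : ∀ i, u i = a i := by
    intro i
    have h5 := hk1 i
    have hai : (1:ℤ) ≤ a i := by exact_mod_cast ha i
    have hge : (a i : ℤ) ≤ u i := by
      nlinarith [Int.natCast_nonneg (u' i)]
    have := hu i
    omega
  obtain ⟨i, hine⟩ := hi
  exact hine (hua i)

include ha1 in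
theorem mem_canon_alpha [DecidableEq ↥(Mon m n a b)] (u : Fin m → ℕ) (v : Fin n → ℕ) (i : Fin m) :
    alphaM m n a b i ∈ canon m n a b u v ↔ 0 < u i := by
  rw [← Multiset.count_pos, count_alpha m n a b hm hn ha hb hcop ha1 u v i]

include ha1 in
theorem mem_canon_beta [DecidableEq ↥(Mon m n a b)] (u : Fin m → ℕ) (v : Fin n → ℕ) (j : Fin n) :
    betaM m n a b j ∈ canon m n a b u v ↔ 0 < v j := by
  rw [← Multiset.count_pos, count_beta m n a b hm hn ha hb hcop ha1 u v j]

include ha1 in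
theorem irred_dichotomy (u u' : Fin m → ℕ) (v v' : Fin n → ℕ)
    (hirr : Irredundant (canon m n a b u v) (canon m n a b u' v')) :
    (∀ i, u i = 0 ∨ u' i = 0) ∧ (∀ j, v j = 0 ∨ v' j = 0) := by
  classical
  constructor
  · intro i
    by_contra hcon
    push_neg at hcon
    exact hirr _ ((mem_canon_alpha m n a b hm hn ha hb hcop ha1 u v i).mpr
        (Nat.pos_of_ne_zero hcon.1))
      ((mem_canon_alpha m n a b hm hn ha hb hcop ha1 u' v' i).mpr
        (Nat.pos_of_ne_zero hcon.2))
  · intro j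
    by_contra hcon
    push_neg at hcon
    exact hirr _ ((mem_canon_beta m n a b hm hn ha hb hcop ha1 u v j).mpr
        (Nat.pos_of_ne_zero hcon.1))
      ((mem_canon_beta m n a b hm hn ha hb hcop ha1 u' v' j).mpr
        (Nat.pos_of_ne_zero hcon.2))

omit hcop in
theorem rigid (u u' : Fin m → ℕ) (v v' : Fin n → ℕ) (k : ℤ) (hkpos : 1 ≤ k)
    (hk1 : ∀ i, (u i : ℤ) = u' i + k * a i) (hk2 : ∀ j, (v' j : ℤ) = v j + k * b j)
    (du : ∀ i, u i = 0 ∨ u' i = 0) (dv : ∀ j, v j = 0 ∨ v' j = 0) :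
    (∀ i, u' i = 0 ∧ (u i : ℤ) = k * a i) ∧ (∀ j, v j = 0 ∧ (v' j : ℤ) = k * b j) := by
  constructor
  · intro i
    have hai : (1:ℤ) ≤ a i := by exact_mod_cast ha i
    have h5 := hk1 i
    have hka : (1:ℤ) ≤ k * a i := by nlinarith
    have hu1 : (1:ℤ) ≤ u i := by linarith [Int.natCast_nonneg (u' i)]
    have hu1' : 1 ≤ u i := by exact_mod_cast hu1
    have hu'0 : u' i = 0 := by
      rcases du i with h | h
      · omega
      · exact h
    refine ⟨hu'0, by rw [h5, hu'0]; simp⟩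
  · intro j
    have hbj : (1:ℤ) ≤ b j := by exact_mod_cast hb j
    have h5 := hk2 j
    have hkb : (1:ℤ) ≤ k * b j := by nlinarith
    have hv1 : (1:ℤ) ≤ v' j := by linarith [Int.natCast_nonneg (v j)]
    have hv1' : 1 ≤ v' j := by exact_mod_cast hv1
    have hv0 : v j = 0 := by
      rcases dv j with h | h
      · exact h
      · omega
    refine ⟨hv0, by rw [h5, hv0]; simp⟩

omit hm hn ha hb hcop in
theorem canon_smul_alpha (K : ℕ) :
    canon m n a b (fun i => K * a i) 0
      = K • ∑ i, a i • ({alphaM m n a b i} : Multiset ↥(Mon m n a b)) := by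
  unfold canon
  simp only [Pi.zero_apply, zero_smul, Finset.sum_const_zero, add_zero]
  rw [Finset.smul_sum]
  exact Finset.sum_congr rfl fun i _ => (smul_smul K (a i) _).symm

omit hm hn ha hb hcop in
theorem canon_smul_beta (K : ℕ) :
    canon m n a b 0 (fun j => K * b j)
      = K • ∑ j, b j • ({betaM m n a b j} : Multiset ↥(Mon m n a b)) := by
  unfold canon
  simp only [Pi.zero_apply, zero_smul, Finset.sum_const_zero, zero_add]
  rw [Finset.smul_sum]
  exact Finset.sum_congr rfl fun j _ => (smul_smul K (b j) _).symm

omit hm hn ha hb hcop in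
theorem canon_a0 :
    (∑ i, a i • ({alphaM m n a b i} : Multiset ↥(Mon m n a b))) = canon m n a b a 0 := by
  unfold canon
  simp

omit hm hn ha hb hcop in
theorem canon_0b :
    (∑ j, b j • ({betaM m n a b j} : Multiset ↥(Mon m n a b))) = canon m n a b 0 b := by
  unfold canon
  simp

end Main

end MFA



/-- Given positive integers `a 1, …, a m` and `b 1, …, b n` with no common divisor
greater than `1`, with `a 1 ≠ 1` if `m = 1` and `b 1 ≠ 1` if `n = 1`, and with
`∑ a i > ∑ b j`, there is a length-factorial additive submonoid of the nonnegative
real numbers with purely long atoms `α i` and purely short atoms `β j` having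
`∑ (a i) α i = ∑ (b j) β j` as an unbalanced master factorization relation. -/
theorem master_factorization_attainable (m n : ℕ) (hm : 0 < m) (hn : 0 < n)
    (a : Fin m → ℕ) (b : Fin n → ℕ) (ha : ∀ i, 0 < a i) (hb : ∀ j, 0 < b j)
    (hcop : ∀ d : ℕ, 1 < d → ¬((∀ i, d ∣ a i) ∧ (∀ j, d ∣ b j)))
    (ha1 : m = 1 → ∀ i, a i ≠ 1) (hb1 : n = 1 → ∀ j, b j ≠ 1)
    (hsum : ∑ j, b j < ∑ i, a i) :
    ∃ (M : AddSubmonoid ℝ) (α : Fin m → ↥M) (β : Fin n → ↥M),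
      (∀ x ∈ M, (0 : ℝ) ≤ x) ∧
      IsLFM ↥M ∧
      (∀ i, IsPurelyLong (α i)) ∧
      (∀ j, IsPurelyShort (β j)) ∧
      (∑ i, a i • α i = ∑ j, b j • β j) ∧
      Multiset.card (∑ i, a i • ({α i} : Multiset ↥M)) ≠
        Multiset.card (∑ j, b j • ({β j} : Multiset ↥M)) ∧
      IsMasterRel (∑ i, a i • ({α i} : Multiset ↥M))
        (∑ j, b j • ({β j} : Multiset ↥M)) := by
  classical
  refine ⟨MFA.Mon m n a b, MFA.alphaM m n a b, MFA.betaM m n a b,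
    MFA.mem_nonneg m n a b hn hm ha hb, ?_, ?_, ?_, ?_, ?_, ?_⟩
  · -- IsLFM
    constructor
    · intro x hx
      obtain ⟨u, v, huv⟩ := MFA.mem_rep m n a b x.2
      refine ⟨MFA.canon m n a b u v, ?_, ?_⟩
      · intro y hy
        rcases MFA.canon_mem m n a b u v hy with ⟨i, rfl⟩ | ⟨j, rfl⟩
        · exact MFA.atom_alpha m n a b hm hn ha hb hcop ha1 i
        · exact MFA.atom_beta m n a b hm hn ha hb hcop hb1 j
      · apply Subtype.ext
        rw [MFA.canon_sum m n a b u v, ← huv]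
    · intro x z₁ z₂ h₁ h₂ hcard
      obtain ⟨u, v, rfl⟩ := MFA.factor_canon m n a b hm hn ha hb hcop hb1 z₁ h₁.1
      obtain ⟨u', v', rfl⟩ := MFA.factor_canon m n a b hm hn ha hb hcop hb1 z₂ h₂.1
      have hval : ∑ i, u i • MFA.AA m n b i + ∑ j, v j • MFA.BB m n a j
          = ∑ i, u' i • MFA.AA m n b i + ∑ j, v' j • MFA.BB m n a j := by
        have e1 := MFA.canon_sum m n a b u v
        have e2 := MFA.canon_sum m n a b u' v'
        rw [h₁.2] at e1
        rw [h₂.2] at e2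
        rw [← e1, ← e2]
      obtain ⟨k, hk1, hk2⟩ := MFA.counts_rel m n a b hm hn ha hb hcop u u' v v' hval
      rw [MFA.canon_card m n a b u v, MFA.canon_card m n a b u' v'] at hcard
      have s1 := MFA.sum_eq_int m n a b hm hn ha hb u u' a k hk1
      have s2 := MFA.sum_eq_int m n a b hm hn ha hb v' v b k hk2
      have hcastc : (∑ i, (u i : ℤ)) + ∑ j, (v j : ℤ)
          = (∑ i, (u' i : ℤ)) + ∑ j, (v' j : ℤ) := by exact_mod_cast hcard
      have hk0 : k = 0 := by
        by_contra hk0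
        have hs : k * (∑ i, (a i : ℤ)) = k * ∑ j, (b j : ℤ) := by linarith
        have hab : (∑ j, (b j : ℤ)) < ∑ i, (a i : ℤ) := by exact_mod_cast hsum
        have := mul_left_cancel₀ hk0 hs
        omega
      have hu : u = u' := funext fun i => by have := hk1 i; rw [hk0] at this; omega
      have hv : v = v' := funext fun j => by have := hk2 j; rw [hk0] at this; omega
      rw [hu, hv]
  · -- purely long
    intro i0
    refine ⟨MFA.atom_alpha m n a b hm hn ha hb hcop ha1 i0, ?_, ?_⟩
    · intro hpr
      set j0 : Fin n := ⟨0, hn⟩ with hj0def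
      set X1 : ↥(MFA.Mon m n a b) := ∑ j, (if j = j0 then 1 else 0 : ℕ) • MFA.betaM m n a b j
        with hX1
      set X2 : ↥(MFA.Mon m n a b) := ∑ j, (b j - if j = j0 then 1 else 0) • MFA.betaM m n a b j
        with hX2
      have hsplitB : ∑ j, b j • MFA.betaM m n a b j = X1 + X2 := by
        rw [hX1, hX2, ← Finset.sum_add_distrib]
        apply Finset.sum_congr rfl
        intro j _
        rw [← add_smul]
        congr 1
        have := hb j
        split_ifs <;> omega
      have hdvd : AddDvd (MFA.alphaM m n a b i0) (X1 + X2) := by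
        refine ⟨∑ i, (a i - if i = i0 then 1 else 0) • MFA.alphaM m n a b i, ?_⟩
        rw [← hsplitB, ← MFA.masterM m n a b hm hn ha hb hcop]
        apply Subtype.ext
        push_cast
        exact MFA.split_off_A m n a b hm hn ha hb hcop a i0 (ha i0)
      rcases hpr.2 X1 X2 hdvd with hd | hd
      · rw [hX1] at hd
        refine MFA.no_dvd_alpha m n a b hm hn ha hb hcop i0 _ ?_ ?_ hd
        · intro j
          split_ifs with h
          · exact hb j
          · exact Nat.zero_le _
        · by_cases hbj0 : b j0 = 1
          · have hn1 : n ≠ 1 := fun h => (hb1 h j0) hbj0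
            obtain ⟨j', hj'⟩ := MFA.exists_ne_index hn hn1 j0
            refine ⟨j', ?_⟩
            rw [if_neg hj']
            have := hb j'
            omega
          · refine ⟨j0, ?_⟩
            rw [if_pos rfl]
            omega
      · rw [hX2] at hd
        refine MFA.no_dvd_alpha m n a b hm hn ha hb hcop i0 _ ?_ ?_ hd
        · intro j
          exact Nat.sub_le _ _
        · refine ⟨j0, ?_⟩
          rw [if_pos rfl]
          have := hb j0
          omega
    · intro x z₁ z₂ h₁ h₂ hirr hmem
      obtain ⟨u, v, rfl⟩ := MFA.factor_canon m n a b hm hn ha hb hcop hb1 z₁ h₁.1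
      obtain ⟨u', v', rfl⟩ := MFA.factor_canon m n a b hm hn ha hb hcop hb1 z₂ h₂.1
      have hval : ∑ i, u i • MFA.AA m n b i + ∑ j, v j • MFA.BB m n a j
          = ∑ i, u' i • MFA.AA m n b i + ∑ j, v' j • MFA.BB m n a j := by
        have e1 := MFA.canon_sum m n a b u v
        have e2 := MFA.canon_sum m n a b u' v'
        rw [h₁.2] at e1
        rw [h₂.2] at e2
        rw [← e1, ← e2]
      obtain ⟨k, hk1, hk2⟩ := MFA.counts_rel m n a b hm hn ha hb hcop u u' v v' hval
      have dich := MFA.irred_dichotomy m n a b hm hn ha hb hcop ha1 u u' v v' hirr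
      have hu0 : 0 < u i0 := (MFA.mem_canon_alpha m n a b hm hn ha hb hcop ha1 u v i0).mp hmem
      have hu'0 : u' i0 = 0 := by
        rcases dich.1 i0 with h | h
        · omega
        · exact h
      have hkpos : 1 ≤ k := by
        have h5 := hk1 i0
        rw [hu'0] at h5
        push_cast at h5
        have hai : (1:ℤ) ≤ a i0 := by exact_mod_cast ha i0
        have hui : (1:ℤ) ≤ u i0 := by exact_mod_cast hu0
        by_contra hcon
        push_neg at hcon
        have hk0' : k ≤ 0 := by omega
        nlinarith [mul_nonpos_of_nonpos_of_nonneg hk0' (by linarith : (0:ℤ) ≤ (a i0 : ℤ))]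
      obtain ⟨ruA, ruB⟩ := MFA.rigid m n a b hm hn ha hb u u' v v' k hkpos hk1 hk2 dich.1 dich.2
      rw [MFA.canon_card m n a b u v, MFA.canon_card m n a b u' v']
      have hv0 : ∑ j, v j = 0 := Finset.sum_eq_zero fun j _ => (ruB j).1
      have hu'00 : ∑ i, u' i = 0 := Finset.sum_eq_zero fun i _ => (ruA i).1
      have su : (∑ i, (u i : ℤ)) = k * ∑ i, (a i : ℤ) := by
        rw [Finset.mul_sum, ← Finset.sum_congr rfl fun i (_ : i ∈ Finset.univ) => (ruA i).2]
      have sv' : (∑ j, (v' j : ℤ)) = k * ∑ j, (b j : ℤ) := by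
        rw [Finset.mul_sum, ← Finset.sum_congr rfl fun j (_ : j ∈ Finset.univ) => (ruB j).2]
      have hab : (∑ j, (b j : ℤ)) < ∑ i, (a i : ℤ) := by exact_mod_cast hsum
      have hfin : (∑ i, (u' i : ℤ)) + ∑ j, (v' j : ℤ) < (∑ i, (u i : ℤ)) + ∑ j, (v j : ℤ) := by
        have e1 : (∑ i, (u' i : ℤ)) = 0 := by exact_mod_cast hu'00
        have e2 : (∑ j, (v j : ℤ)) = 0 := by exact_mod_cast hv0
        rw [e1, e2, su, sv']
        nlinarith
      exact_mod_cast hfin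
  · -- purely short
    intro j0
    refine ⟨MFA.atom_beta m n a b hm hn ha hb hcop hb1 j0, ?_, ?_⟩
    · intro hpr
      set i0 : Fin m := ⟨0, hm⟩ with hi0def
      set X1 : ↥(MFA.Mon m n a b) := ∑ i, (if i = i0 then 1 else 0 : ℕ) • MFA.alphaM m n a b i
        with hX1
      set X2 : ↥(MFA.Mon m n a b) := ∑ i, (a i - if i = i0 then 1 else 0) • MFA.alphaM m n a b i
        with hX2
      have hsplitA : ∑ i, a i • MFA.alphaM m n a b i = X1 + X2 := by
        rw [hX1, hX2, ← Finset.sum_add_distrib]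
        apply Finset.sum_congr rfl
        intro i _
        rw [← add_smul]
        congr 1
        have := ha i
        split_ifs <;> omega
      have hdvd : AddDvd (MFA.betaM m n a b j0) (X1 + X2) := by
        refine ⟨∑ j, (b j - if j = j0 then 1 else 0) • MFA.betaM m n a b j, ?_⟩
        rw [← hsplitA]
        apply Subtype.ext
        push_cast
        have hrr : ∑ i, a i • MFA.AA m n b i
            = MFA.BB m n a j0 + ∑ j, (b j - if j = j0 then 1 else 0) • MFA.BB m n a j := by
          rw [MFA.master_real m n a b]
          exact MFA.split_off_B m n a b hm hn ha hb hcop b j0 (hb j0)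
        exact hrr
      rcases hpr.2 X1 X2 hdvd with hd | hd
      · rw [hX1] at hd
        refine MFA.no_dvd_beta m n a b hm hn ha hb hcop j0 _ ?_ ?_ hd
        · intro i
          split_ifs with h
          · exact ha i
          · exact Nat.zero_le _
        · by_cases hai0 : a i0 = 1
          · have hm1 : m ≠ 1 := fun h => (ha1 h i0) hai0
            obtain ⟨i', hi'⟩ := MFA.exists_ne_index hm hm1 i0
            refine ⟨i', ?_⟩
            rw [if_neg hi']
            have := ha i'
            omega
          · refine ⟨i0, ?_⟩
            rw [if_pos rfl]
            omega
      · rw [hX2] at hd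
        refine MFA.no_dvd_beta m n a b hm hn ha hb hcop j0 _ ?_ ?_ hd
        · intro i
          exact Nat.sub_le _ _
        · refine ⟨i0, ?_⟩
          rw [if_pos rfl]
          have := ha i0
          omega
    · intro x z₁ z₂ h₁ h₂ hirr hmem
      obtain ⟨u, v, rfl⟩ := MFA.factor_canon m n a b hm hn ha hb hcop hb1 z₁ h₁.1
      obtain ⟨u', v', rfl⟩ := MFA.factor_canon m n a b hm hn ha hb hcop hb1 z₂ h₂.1
      have hval : ∑ i, u i • MFA.AA m n b i + ∑ j, v j • MFA.BB m n a j
          = ∑ i, u' i • MFA.AA m n b i + ∑ j, v' j • MFA.BB m n a j := by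
        have e1 := MFA.canon_sum m n a b u v
        have e2 := MFA.canon_sum m n a b u' v'
        rw [h₁.2] at e1
        rw [h₂.2] at e2
        rw [← e1, ← e2]
      obtain ⟨k, hk1, hk2⟩ := MFA.counts_rel m n a b hm hn ha hb hcop u u' v v' hval
      have dich := MFA.irred_dichotomy m n a b hm hn ha hb hcop ha1 u u' v v' hirr
      have hv0 : 0 < v j0 := (MFA.mem_canon_beta m n a b hm hn ha hb hcop ha1 u v j0).mp hmem
      have hv'0 : v' j0 = 0 := by
        rcases dich.2 j0 with h | h
        · omega
        · exact h
      have hkneg : 1 ≤ -k := by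
        have h5 := hk2 j0
        rw [hv'0] at h5
        push_cast at h5
        have hbj : (1:ℤ) ≤ b j0 := by exact_mod_cast hb j0
        have hvj : (1:ℤ) ≤ v j0 := by exact_mod_cast hv0
        by_contra hcon
        push_neg at hcon
        have hk0' : 0 ≤ k := by omega
        nlinarith [mul_nonneg hk0' (by linarith : (0:ℤ) ≤ (b j0 : ℤ))]
      have hk1' : ∀ i, (u' i : ℤ) = u i + (-k) * a i := fun i => by linear_combination -(hk1 i)
      have hk2' : ∀ j, (v j : ℤ) = v' j + (-k) * b j := fun j => by linear_combination -(hk2 j)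
      obtain ⟨ruA, ruB⟩ := MFA.rigid m n a b hm hn ha hb u' u v' v (-k) hkneg hk1' hk2'
        (fun i => (dich.1 i).symm) (fun j => (dich.2 j).symm)
      rw [MFA.canon_card m n a b u v, MFA.canon_card m n a b u' v']
      have hu00 : ∑ i, u i = 0 := Finset.sum_eq_zero fun i _ => (ruA i).1
      have hv'00 : ∑ j, v' j = 0 := Finset.sum_eq_zero fun j _ => (ruB j).1
      have su' : (∑ i, (u' i : ℤ)) = (-k) * ∑ i, (a i : ℤ) := by
        rw [Finset.mul_sum, ← Finset.sum_congr rfl fun i (_ : i ∈ Finset.univ) => (ruA i).2]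
      have sv : (∑ j, (v j : ℤ)) = (-k) * ∑ j, (b j : ℤ) := by
        rw [Finset.mul_sum, ← Finset.sum_congr rfl fun j (_ : j ∈ Finset.univ) => (ruB j).2]
      have hab : (∑ j, (b j : ℤ)) < ∑ i, (a i : ℤ) := by exact_mod_cast hsum
      have hfin : (∑ i, (u i : ℤ)) + ∑ j, (v j : ℤ) < (∑ i, (u' i : ℤ)) + ∑ j, (v' j : ℤ) := by
        have e1 : (∑ i, (u i : ℤ)) = 0 := by exact_mod_cast hu00
        have e2 : (∑ j, (v' j : ℤ)) = 0 := by exact_mod_cast hv'00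
        rw [e1, e2, su', sv]
        nlinarith
      exact_mod_cast hfin
  · -- the relation
    exact MFA.masterM m n a b hm hn ha hb hcop
  · -- cards differ
    rw [MFA.canon_a0 m n a b, MFA.canon_0b m n a b,
      MFA.canon_card m n a b a 0, MFA.canon_card m n a b 0 b]
    simp only [Pi.zero_apply, Finset.sum_const_zero, add_zero, zero_add]
    omega
  · -- master relation
    constructor
    · refine ⟨∑ j, b j • MFA.betaM m n a b j, ⟨?_, ?_⟩, ⟨?_, ?_⟩⟩
      · intro y hy
        rw [MFA.canon_a0 m n a b] at hy
        rcases MFA.canon_mem m n a b a 0 hy with ⟨i, rfl⟩ | ⟨j, rfl⟩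
        · exact MFA.atom_alpha m n a b hm hn ha hb hcop ha1 i
        · exact MFA.atom_beta m n a b hm hn ha hb hcop hb1 j
      · rw [MFA.canon_a0 m n a b]
        apply Subtype.ext
        rw [MFA.canon_sum m n a b a 0]
        have e2 := MFA.coe_comboM m n a b 0 b
        simp only [Pi.zero_apply, zero_smul, Finset.sum_const_zero, zero_add, add_zero] at e2 ⊢
        rw [e2]
        exact MFA.master_real m n a b
      · intro y hy
        rw [MFA.canon_0b m n a b] at hy
        rcases MFA.canon_mem m n a b 0 b hy with ⟨i, rfl⟩ | ⟨j, rfl⟩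
        · exact MFA.atom_alpha m n a b hm hn ha hb hcop ha1 i
        · exact MFA.atom_beta m n a b hm hn ha hb hcop hb1 j
      · rw [MFA.canon_0b m n a b]
        apply Subtype.ext
        rw [MFA.canon_sum m n a b 0 b]
        have e2 := MFA.coe_comboM m n a b 0 b
        simp only [Pi.zero_apply, zero_smul, Finset.sum_const_zero, zero_add, add_zero] at e2 ⊢
        rw [e2]
    · intro x w₁ w₂ h₁ h₂ hirr hlen
      obtain ⟨u, v, rfl⟩ := MFA.factor_canon m n a b hm hn ha hb hcop hb1 w₁ h₁.1
      obtain ⟨u', v', rfl⟩ := MFA.factor_canon m n a b hm hn ha hb hcop hb1 w₂ h₂.1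
      have hval : ∑ i, u i • MFA.AA m n b i + ∑ j, v j • MFA.BB m n a j
          = ∑ i, u' i • MFA.AA m n b i + ∑ j, v' j • MFA.BB m n a j := by
        have e1 := MFA.canon_sum m n a b u v
        have e2 := MFA.canon_sum m n a b u' v'
        rw [h₁.2] at e1
        rw [h₂.2] at e2
        rw [← e1, ← e2]
      obtain ⟨k, hk1, hk2⟩ := MFA.counts_rel m n a b hm hn ha hb hcop u u' v v' hval
      have dich := MFA.irred_dichotomy m n a b hm hn ha hb hcop ha1 u u' v v' hirr
      rcases lt_trichotomy k 0 with hk | hk | hk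
      · -- w₁ = K • z₂, w₂ = K • z₁
        have hkneg : 1 ≤ -k := by omega
        have hk1' : ∀ i, (u' i : ℤ) = u i + (-k) * a i := fun i => by linear_combination -(hk1 i)
        have hk2' : ∀ j, (v j : ℤ) = v' j + (-k) * b j := fun j => by linear_combination -(hk2 j)
        obtain ⟨ruA, ruB⟩ := MFA.rigid m n a b hm hn ha hb u' u v' v (-k) hkneg hk1' hk2'
          (fun i => (dich.1 i).symm) (fun j => (dich.2 j).symm)
        refine ⟨(-k).toNat, by omega, Or.inr ⟨?_, ?_⟩⟩
        · have hufun : u = 0 := funext fun i => (ruA i).1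
          have hvfun : v = fun j => (-k).toNat * b j := by
            funext j
            have h5 := (ruB j).2
            have : ((-k).toNat : ℤ) = -k := Int.toNat_of_nonneg (by omega)
            have : ((((-k).toNat * b j : ℕ)) : ℤ) = (v j : ℤ) := by
              push_cast
              rw [this]
              linarith [h5]
            exact_mod_cast this.symm
          rw [hufun, hvfun, MFA.canon_smul_beta m n a b]
        · have hv'fun : v' = 0 := funext fun j => (ruB j).1
          have hu'fun : u' = fun i => (-k).toNat * a i := by
            funext i
            have h5 := (ruA i).2
            have htn : ((-k).toNat : ℤ) = -k := Int.toNat_of_nonneg (by omega)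
            have : ((((-k).toNat * a i : ℕ)) : ℤ) = (u' i : ℤ) := by
              push_cast
              rw [htn]
              linarith [h5]
            exact_mod_cast this.symm
          rw [hv'fun, hu'fun, MFA.canon_smul_alpha m n a b]
      · -- k = 0 : contradiction with unequal lengths
        exfalso
        apply hlen
        have hu : u = u' := funext fun i => by have := hk1 i; rw [hk] at this; omega
        have hv : v = v' := funext fun j => by have := hk2 j; rw [hk] at this; omega
        rw [hu, hv]
      · -- w₁ = K • z₁, w₂ = K • z₂
        have hkpos : 1 ≤ k := by omega
        obtain ⟨ruA, ruB⟩ := MFA.rigid m n a b hm hn ha hb u u' v v' k hkpos hk1 hk2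
          dich.1 dich.2
        refine ⟨k.toNat, by omega, Or.inl ⟨?_, ?_⟩⟩
        · have hvfun : v = 0 := funext fun j => (ruB j).1
          have hufun : u = fun i => k.toNat * a i := by
            funext i
            have h5 := (ruA i).2
            have htn : (k.toNat : ℤ) = k := Int.toNat_of_nonneg (by omega)
            have : (((k.toNat * a i : ℕ)) : ℤ) = (u i : ℤ) := by
              push_cast
              rw [htn]
              linarith [h5]
            exact_mod_cast this.symm
          rw [hvfun, hufun, MFA.canon_smul_alpha m n a b]
        · have hu'fun : u' = 0 := funext fun i => (ruA i).1
          have hv'fun : v' = fun j => k.toNat * b j := by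
            funext j
            have h5 := (ruB j).2
            have htn : (k.toNat : ℤ) = k := Int.toNat_of_nonneg (by omega)
            have : (((k.toNat * b j : ℕ)) : ℤ) = (v' j : ℤ) := by
              push_cast
              rw [htn]
              linarith [h5]
            exact_mod_cast this.symm
          rw [hu'fun, hv'fun, MFA.canon_smul_beta m n a b]
end

section
/- For every pair (m, n) of positive integers, there exists a cancellative commutative monoid M (which can be taken to be an additive submonoid of the nonnegative real numbers) having exactly m purely long atoms and exactly n purely short atoms. -/
section AuxPureAtoms
open Finset

noncomputable def tL : ℝ := liouvilleNumber 10

lemma tL_pos : 0 < tL := by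
  have h : (1:ℝ) < 10 := by norm_num
  have := LiouvilleNumber.partialSum_add_remainder h 0
  have h2 := LiouvilleNumber.remainder_pos h 0
  have h3 : LiouvilleNumber.partialSum 10 0 = 1/10 := by
    simp [LiouvilleNumber.partialSum]
  unfold tL
  rw [← this, h3]
  linarith

lemma tL_lt_two : tL < 2 := by
  have h : (1:ℝ) < 10 := by norm_num
  have := LiouvilleNumber.partialSum_add_remainder h 0
  have h2 := LiouvilleNumber.remainder_lt 0 (by norm_num : (2:ℝ) ≤ 10)
  have h3 : LiouvilleNumber.partialSum 10 0 = 1/10 := by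
    simp [LiouvilleNumber.partialSum]
  unfold tL
  rw [← this, h3]
  simp at h2
  linarith

lemma tL_transcendental : Transcendental ℤ tL :=
  transcendental_liouvilleNumber (by norm_num)

/-- integer linear independence of powers of tL -/
lemma tL_indep (N : ℕ) (γ : ℕ → ℤ) (h : ∑ k ∈ range N, (γ k : ℝ) * tL ^ k = 0) :
    ∀ k < N, γ k = 0 := by
  by_contra hc
  push_neg at hc
  obtain ⟨k0, hk0, hne⟩ := hc
  apply tL_transcendental
  refine ⟨∑ k ∈ range N, Polynomial.C (γ k) * Polynomial.X ^ k, ?_, ?_⟩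
  · intro hp
    apply hne
    have := congrArg (fun p => Polynomial.coeff p k0) hp
    simpa [Polynomial.finset_sum_coeff, Polynomial.coeff_C_mul, Polynomial.coeff_X_pow,
      Finset.sum_ite_eq' (range N), hk0] using this
  · rw [map_sum]
    simpa using h


variable (m n : ℕ)

noncomputable def uu : ℝ := tL / (24*m*n)

lemma uu_pos (hm : 0 < m) (hn : 0 < n) : 0 < uu m n := by
  have := tL_pos
  have hm' : (0:ℝ) < m := by exact_mod_cast hm
  have hn' : (0:ℝ) < n := by exact_mod_cast hn
  unfold uu; positivity

lemma uu_le (hm : 0 < m) (hn : 0 < n) : uu m n ≤ 1/(12*m*n) := by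
  have h1 := tL_lt_two
  have h0 := tL_pos
  have hm' : (1:ℝ) ≤ m := by exact_mod_cast hm
  have hn' : (1:ℝ) ≤ n := by exact_mod_cast hn
  have h12 : (0:ℝ) < 12*m*n := by positivity
  unfold uu
  rw [div_le_div_iff₀ (by positivity) (by positivity)]
  nlinarith

lemma uu_lt_one (hm : 0 < m) (hn : 0 < n) : uu m n < 1 := by
  have h := uu_le m n hm hn
  have hm' : (1:ℝ) ≤ m := by exact_mod_cast hm
  have hn' : (1:ℝ) ≤ n := by exact_mod_cast hn
  have : (1:ℝ)/(12*m*n) ≤ 1/12 := by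
    apply div_le_div_of_nonneg_left (by norm_num) (by norm_num) ?_
    nlinarith
  linarith

lemma uu_indep (hm : 0 < m) (hn : 0 < n) (N : ℕ) (γ : ℕ → ℤ)
    (h : ∑ k ∈ range N, (γ k : ℝ) * (uu m n) ^ k = 0) : ∀ k < N, γ k = 0 := by
  have hc : ((24*m*n : ℤ) : ℝ) ≠ 0 := by
    have hm' : (1:ℝ) ≤ m := by exact_mod_cast hm
    have hn' : (1:ℝ) ≤ n := by exact_mod_cast hn
    push_cast; nlinarith
  have key := tL_indep N (fun k => γ k * (24*m*n)^(N-k)) ?_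
  · intro k hk
    have := key k hk
    rcases mul_eq_zero.1 this with h1 | h2
    · exact h1
    · exfalso; apply hc; exact_mod_cast (pow_eq_zero_iff (by omega : N - k ≠ 0)).1 h2
  · have expand : ∀ k ∈ range N, ((γ k * (24*m*n)^(N-k) : ℤ) : ℝ) * tL ^ k
        = ((24*m*n:ℤ):ℝ)^N * ((γ k : ℝ) * (uu m n) ^ k) := by
      intro k hk
      simp only [mem_range] at hk
      have hkN : k ≤ N := le_of_lt hk
      have : ((24*m*n:ℤ):ℝ)^N = ((24*m*n:ℤ):ℝ)^(N-k) * ((24*m*n:ℤ):ℝ)^k := by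
        rw [← pow_add]; congr 1; omega
      rw [this]
      have huu : (uu m n)^k = tL^k / ((24*m*n:ℤ):ℝ)^k := by
        unfold uu; rw [div_pow]; push_cast; ring_nf
      rw [huu]
      field_simp
      push_cast
      ring
    rw [Finset.sum_congr rfl expand, ← Finset.mul_sum, h, mul_zero]


noncomputable def P1 (m n : ℕ) : ℝ := ∑ i ∈ range m, (uu m n)^(i+1)
noncomputable def P2 (m n : ℕ) : ℝ := ∑ j ∈ range (n-1), (uu m n)^(m+j+1)
noncomputable def eE (m n : ℕ) : ℝ := 3*n*(P1 m n) - 2*m*(P2 m n)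

noncomputable def gen (m n : ℕ) (k : ℕ) : ℝ :=
  if k < m then 2 + 2*m*(uu m n)^(k+1)
  else if k + 1 < m + n then 3 + 2*m*(uu m n)^(k+1)
  else 3 + eE m n

section Bounds
variable (m n : ℕ)

lemma pow_small' (hm : 0 < m) (hn : 0 < n) (k : ℕ) (hk : 1 ≤ k) :
    0 < (uu m n)^k ∧ 2*(m:ℝ)*(uu m n)^k ≤ 1/(6*n) := by
  have h0 := uu_pos m n hm hn
  have h1 := uu_lt_one m n hm hn
  have h2 := uu_le m n hm hn
  have hm' : (1:ℝ) ≤ m := by exact_mod_cast hm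
  have hn' : (1:ℝ) ≤ n := by exact_mod_cast hn
  constructor
  · positivity
  · have hk1 : (uu m n)^k ≤ uu m n := by
      calc (uu m n)^k ≤ (uu m n)^1 := by
            apply pow_le_pow_of_le_one h0.le h1.le hk
        _ = uu m n := pow_one _
    have : 2*(m:ℝ)*(uu m n)^k ≤ 2*m*(1/(12*m*n)) := by
      apply mul_le_mul_of_nonneg_left (hk1.trans h2) (by positivity)
    calc 2*(m:ℝ)*(uu m n)^k ≤ 2*m*(1/(12*m*n)) := this
      _ = 1/(6*n) := by field_simp; ring
end Bounds

section Bounds2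
variable (m n : ℕ)

lemma P1_bounds (hm : 0 < m) (hn : 0 < n) : (uu m n)^m ≤ P1 m n ∧ P1 m n ≤ m * uu m n := by
  have h0 := uu_pos m n hm hn
  have h1 := uu_lt_one m n hm hn
  constructor
  · have hmem : m - 1 ∈ range m := by simp; omega
    have h := Finset.single_le_sum (f := fun i => (uu m n)^(i+1))
      (fun i _ => by positivity) hmem
    have he : (m-1) + 1 = m := by omega
    rw [he] at h
    exact h
  · calc P1 m n ≤ ∑ _i ∈ range m, uu m n := by
          apply Finset.sum_le_sum
          intro i _
          calc (uu m n)^(i+1) ≤ (uu m n)^1 :=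
                pow_le_pow_of_le_one h0.le h1.le (by omega)
            _ = uu m n := pow_one _
      _ = m * uu m n := by simp [mul_comm]

lemma P2_bounds (hm : 0 < m) (hn : 0 < n) : 0 ≤ P2 m n ∧ P2 m n ≤ n * (uu m n) * (uu m n)^m := by
  have h0 := uu_pos m n hm hn
  have h1 := uu_lt_one m n hm hn
  constructor
  · apply Finset.sum_nonneg; intro j _; positivity
  · calc P2 m n ≤ ∑ _j ∈ range (n-1), (uu m n)^(m+1) := by
          apply Finset.sum_le_sum
          intro j _
          apply pow_le_pow_of_le_one h0.le h1.le (by omega)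
      _ = (n-1 : ℕ) * (uu m n)^(m+1) := by simp [mul_comm]
      _ ≤ n * (uu m n) * (uu m n)^m := by
          rw [pow_succ]
          have : ((n-1:ℕ):ℝ) ≤ n := by
            have : ((n-1:ℕ):ℝ) ≤ ((n:ℕ):ℝ) := by exact_mod_cast Nat.sub_le n 1
            simpa using this
          nlinarith [pow_pos h0 m, h0, mul_pos (pow_pos h0 m) h0]

lemma eE_bounds' (hm : 0 < m) (hn : 0 < n) : 2*(n:ℝ)*(uu m n)^m ≤ eE m n ∧ eE m n ≤ 1/4 := by
  have h0 := uu_pos m n hm hn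
  have h2 := uu_le m n hm hn
  have hm' : (1:ℝ) ≤ m := by exact_mod_cast hm
  have hn' : (1:ℝ) ≤ n := by exact_mod_cast hn
  obtain ⟨p1l, p1u⟩ := P1_bounds m n hm hn
  obtain ⟨p2l, p2u⟩ := P2_bounds m n hm hn
  have hum : (0:ℝ) < (uu m n)^m := pow_pos h0 m
  have hu12 : 12*(m:ℝ)*n*(uu m n) ≤ 1 := by
    have h12 : (0:ℝ) < 12*m*n := by positivity
    rw [le_div_iff₀ h12] at h2
    nlinarith [h2]
  constructor
  · unfold eE
    have key : 2*(m:ℝ)*(P2 m n) ≤ n * (uu m n)^m := by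
      calc 2*(m:ℝ)*(P2 m n) ≤ 2*m*(n * (uu m n) * (uu m n)^m) := by
            apply mul_le_mul_of_nonneg_left p2u (by positivity)
        _ ≤ n * (uu m n)^m := by nlinarith
    nlinarith
  · unfold eE
    have : 3*(n:ℝ)*(P1 m n) ≤ 3*n*(m*uu m n) := by
      apply mul_le_mul_of_nonneg_left p1u (by positivity)
    nlinarith

lemma gen_low' (hm : 0 < m) (hn : 0 < n) (k : ℕ) (hk : k < m) :
    gen m n k = 2 + 2*m*(uu m n)^(k+1) ∧ 2 < gen m n k ∧ gen m n k < 3 := by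
  have h := pow_small' m n hm hn (k+1) (by omega)
  have hn' : (1:ℝ) ≤ n := by exact_mod_cast hn
  have : (1:ℝ)/(6*n) ≤ 1/6 := by
    apply div_le_div_of_nonneg_left (by norm_num) (by norm_num) (by linarith)
  refine ⟨by unfold gen; rw [if_pos hk], ?_, ?_⟩ <;> unfold gen <;> rw [if_pos hk] <;>
    nlinarith [h.1, h.2, mul_pos (by positivity : (0:ℝ) < 2*(m:ℝ)) h.1]

lemma gen_mid' (hm : 0 < m) (hn : 0 < n) (k : ℕ) (hk1 : m ≤ k) (hk2 : k + 1 < m + n) :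
    gen m n k = 3 + 2*m*(uu m n)^(k+1) ∧ 3 < gen m n k ∧ gen m n k < 4 := by
  have h := pow_small' m n hm hn (k+1) (by omega)
  have hn' : (1:ℝ) ≤ n := by exact_mod_cast hn
  have : (1:ℝ)/(6*n) ≤ 1/6 := by
    apply div_le_div_of_nonneg_left (by norm_num) (by norm_num) (by linarith)
  refine ⟨by unfold gen; rw [if_neg (by omega), if_pos hk2], ?_, ?_⟩ <;>
    unfold gen <;> rw [if_neg (by omega), if_pos hk2] <;>
    nlinarith [h.1, h.2, mul_pos (by positivity : (0:ℝ) < 2*(m:ℝ)) h.1]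

lemma gen_last' (hm : 0 < m) (hn : 0 < n) :
    gen m n (m+n-1) = 3 + eE m n ∧ 3 < gen m n (m+n-1) ∧ gen m n (m+n-1) < 4 := by
  obtain ⟨el, eu⟩ := eE_bounds' m n hm hn
  have h0 := uu_pos m n hm hn
  have hn' : (1:ℝ) ≤ n := by exact_mod_cast hn
  have hum : (0:ℝ) < (uu m n)^m := pow_pos h0 m
  refine ⟨by unfold gen; rw [if_neg (by omega), if_neg (by omega)], ?_, ?_⟩ <;>
    unfold gen <;> rw [if_neg (by omega), if_neg (by omega)] <;> nlinarith

end Bounds2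


section Chunk4
variable (m n : ℕ)

lemma gen_lt (hm : 0 < m) (hn : 0 < n) (k1 k2 : ℕ) (h12 : k1 < k2) (h2 : k2 < m + n) :
    gen m n k1 ≠ gen m n k2 := by
  have h0 := uu_pos m n hm hn
  have h1 := uu_lt_one m n hm hn
  rcases lt_or_ge k2 m with hc | hc
  · -- both low
    have e1 := (gen_low' m n hm hn k1 (by omega)).1
    have e2 := (gen_low' m n hm hn k2 hc).1
    have hp : (uu m n)^(k2+1) < (uu m n)^(k1+1) :=
      pow_lt_pow_right_of_lt_one₀ h0 h1 (by omega)
    have hm' : (0:ℝ) < m := by exact_mod_cast hm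
    rw [e1, e2]; intro hcon; nlinarith
  · rcases lt_or_ge k1 m with hd | hd
    · -- low vs (mid or last)
      have e1 := (gen_low' m n hm hn k1 hd).2.2
      have e2 : 3 < gen m n k2 := by
        rcases lt_or_ge (k2+1) (m+n) with he | he
        · exact (gen_mid' m n hm hn k2 hc he).2.1
        · have : k2 = m+n-1 := by omega
          rw [this]; exact (gen_last' m n hm hn).2.1
      intro hcon; rw [hcon] at e1; linarith
    · -- both ≥ m
      rcases lt_or_ge (k2+1) (m+n) with he | he
      · -- both mid
        have e1 := (gen_mid' m n hm hn k1 hd (by omega)).1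
        have e2 := (gen_mid' m n hm hn k2 hc he).1
        have hp : (uu m n)^(k2+1) < (uu m n)^(k1+1) :=
          pow_lt_pow_right_of_lt_one₀ h0 h1 (by omega)
        have hm' : (0:ℝ) < m := by exact_mod_cast hm
        rw [e1, e2]; intro hcon; nlinarith
      · -- k1 mid, k2 last
        have hk2e : k2 = m+n-1 := by omega
        have e1 := (gen_mid' m n hm hn k1 hd (by omega)).1
        have e2 := (gen_last' m n hm hn).1
        have hel := (eE_bounds' m n hm hn).1
        have hsm := (pow_small' m n hm hn 1 le_rfl).2
        have hn' : (1:ℝ) ≤ n := by exact_mod_cast hn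
        have hum : (0:ℝ) < (uu m n)^m := pow_pos h0 m
        -- 2m u^(k1+1) ≤ 2m u^(m+1) = (2m u) u^m ≤ (1/(6n)) u^m < 2n u^m ≤ eE
        have hple : (uu m n)^(k1+1) ≤ (uu m n)^(m+1) :=
          pow_le_pow_of_le_one h0.le h1.le (by omega)
        have key : 2*(m:ℝ)*(uu m n)^(k1+1) < eE m n := by
          have h6n : (1:ℝ)/(6*n) < 2*n := by
            have : (0:ℝ) < 6*n := by positivity
            rw [div_lt_iff₀ this]; nlinarith
          have step : 2*(m:ℝ)*(uu m n)^(m+1) ≤ (1/(6*n)) * (uu m n)^m := by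
            rw [pow_succ]
            calc 2*(m:ℝ)*((uu m n)^m * uu m n) = (2*m*(uu m n)^1) * (uu m n)^m := by ring
              _ ≤ (1/(6*n)) * (uu m n)^m := by
                  apply mul_le_mul_of_nonneg_right hsm hum.le
          have hm' : (0:ℝ) < m := by exact_mod_cast hm
          calc 2*(m:ℝ)*(uu m n)^(k1+1) ≤ 2*m*(uu m n)^(m+1) := by nlinarith
            _ ≤ (1/(6*n)) * (uu m n)^m := step
            _ < 2*n * (uu m n)^m := by nlinarith
            _ ≤ eE m n := hel
        rw [hk2e, e1, e2]; intro hcon; linarith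

lemma gen_inj' (hm : 0 < m) (hn : 0 < n) (k1 k2 : ℕ) (h1 : k1 < m + n) (h2 : k2 < m + n)
    (he : gen m n k1 = gen m n k2) : k1 = k2 := by
  rcases lt_trichotomy k1 k2 with h | h | h
  · exact absurd he (gen_lt m n hm hn k1 k2 h h2)
  · exact h
  · exact absurd he.symm (gen_lt m n hm hn k2 k1 h h1)

lemma sumL (hm : 0 < m) (hn : 0 < n) :
    ∑ i ∈ range m, gen m n i = 2*m + 2*m*(P1 m n) := by
  have : ∀ i ∈ range m, gen m n i = 2 + 2*m*(uu m n)^(i+1) := by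
    intro i hi
    exact (gen_low' m n hm hn i (by simpa using hi)).1
  rw [Finset.sum_congr rfl this, Finset.sum_add_distrib, ← Finset.mul_sum]
  simp [P1, mul_comm]

lemma sumS (hm : 0 < m) (hn : 0 < n) :
    ∑ j ∈ range n, gen m n (m+j) = 3*n + 2*m*(P2 m n) + eE m n := by
  obtain ⟨n', rfl⟩ : ∃ n', n = n'+1 := ⟨n-1, by omega⟩
  rw [Finset.sum_range_succ]
  have hlast : gen m (n'+1) (m+n') = 3 + eE m (n'+1) := by
    have : m + n' = m + (n'+1) - 1 := by omega
    rw [this]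
    exact (gen_last' m (n'+1) hm hn).1
  have hmidv : ∀ j ∈ range n', gen m (n'+1) (m+j) = 3 + 2*m*(uu m (n'+1))^(m+j+1) := by
    intro j hj
    simp only [mem_range] at hj
    exact (gen_mid' m (n'+1) hm hn (m+j) (by omega) (by omega)).1
  rw [Finset.sum_congr rfl hmidv, Finset.sum_add_distrib, ← Finset.mul_sum, hlast]
  have hP2 : P2 m (n'+1) = ∑ j ∈ range n', (uu m (n'+1))^(m+j+1) := by
    simp [P2]
  rw [← hP2, Finset.sum_const, Finset.card_range]
  push_cast
  ring

lemma relation_eq' (hm : 0 < m) (hn : 0 < n) :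
    3*(n:ℝ) * (∑ i ∈ range m, gen m n i) = 2*m * (∑ j ∈ range n, gen m n (m+j)) := by
  rw [sumL m n hm hn, sumS m n hm hn]
  unfold eE
  push_cast
  ring

end Chunk4


section Splits

lemma range_split (N1 N2 : ℕ) (f : ℕ → ℝ) :
    ∑ k ∈ range (N1+N2), f k = (∑ k ∈ range N1, f k) + ∑ k ∈ Finset.Ico N1 (N1+N2), f k := by
  conv_lhs => rw [Finset.range_eq_Ico]
  rw [← Finset.sum_Ico_consecutive f (Nat.zero_le N1) (by omega : N1 ≤ N1+N2)]
  congr 1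
  rw [← Finset.range_eq_Ico]

lemma Ico_split (N1 N2 : ℕ) (hN2 : 0 < N2) (f : ℕ → ℝ) :
    ∑ k ∈ Finset.Ico N1 (N1+N2), f k = (∑ j ∈ range (N2-1), f (N1+j)) + f (N1+N2-1) := by
  obtain ⟨n', rfl⟩ : ∃ n', N2 = n'+1 := ⟨N2-1, by omega⟩
  have h1 : N1 + (n'+1) = (N1+n') + 1 := by omega
  rw [h1, Finset.sum_Ico_succ_top (by omega : N1 ≤ N1+n'), Finset.sum_Ico_eq_sum_range]
  have h2 : N1 + n' - N1 = n' := by omega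
  have h3 : n' + 1 - 1 = n' := by omega
  have h4 : N1 + n' + 1 - 1 = N1 + n' := by omega
  simp only [h2, h3, h4]

lemma bot_split (N1 N2 : ℕ) (hN1 : 0 < N1) (hN2 : 0 < N2) (f : ℕ → ℝ) :
    ∑ p ∈ range (N1+N2), f p
      = f 0 + ((∑ i ∈ range N1, f (1+i)) + ∑ j ∈ range (N2-1), f (N1+1+j)) := by
  conv_lhs => rw [Finset.range_eq_Ico]
  rw [Finset.sum_eq_sum_Ico_succ_bot (by omega : 0 < N1+N2)]
  congr 1
  rw [← Finset.sum_Ico_consecutive f (by omega : 0+1 ≤ N1+1) (by omega : N1+1 ≤ N1+N2)]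
  congr 1
  · rw [Finset.sum_Ico_eq_sum_range]
    have h2 : N1+1-(0+1) = N1 := by omega
    rw [h2]
  · rw [Finset.sum_Ico_eq_sum_range]
    have h2 : N1+N2-(N1+1) = N2-1 := by omega
    rw [h2]

end Splits

section Chunk5
variable (m n : ℕ)

/-- The coefficient function of the combination `∑ γ k • gen k` in the basis `u^p`. -/
noncomputable def DD (m n : ℕ) (γ : ℕ → ℤ) (p : ℕ) : ℤ :=
  if p = 0 then 2*(∑ k ∈ range m, γ k) + 3*(∑ k ∈ Finset.Ico m (m+n), γ k)
  else if p ≤ m then 2*m*γ (p-1) + 3*n*γ (m+n-1)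
  else 2*m*γ (p-1) - 2*m*γ (m+n-1)

lemma claim_eq (hm : 0 < m) (hn : 0 < n) (γ : ℕ → ℤ) :
    ∑ p ∈ range (m+n), ((DD m n γ p : ℝ)) * (uu m n)^p
      = ∑ k ∈ range (m+n), (γ k : ℝ) * gen m n k := by
  set u := uu m n with hu
  rw [range_split m n (fun k => (γ k : ℝ) * gen m n k),
    Ico_split m n hn (fun k => (γ k : ℝ) * gen m n k),
    bot_split m n hm hn (fun p => ((DD m n γ p : ℝ)) * u^p)]
  -- evaluate DD on each piece
  have hD0 : (DD m n γ 0 : ℝ) * u^0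
      = 2*(∑ k ∈ range m, (γ k : ℝ))
        + 3*((∑ j ∈ range (n-1), (γ (m+j) : ℝ)) + (γ (m+n-1) : ℝ)) := by
    have hIcoS : ∑ k ∈ Finset.Ico m (m+n), (γ k : ℝ)
        = (∑ j ∈ range (n-1), (γ (m+j) : ℝ)) + (γ (m+n-1) : ℝ) :=
      Ico_split m n hn (fun k => (γ k : ℝ))
    unfold DD
    rw [if_pos rfl, pow_zero, mul_one]
    push_cast
    try rw [hIcoS]
    try ring
  have hD1 : ∀ i ∈ range m, ((DD m n γ (1+i) : ℝ)) * u^(1+i)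
      = 2*(m:ℝ)*((γ i : ℝ) * u^(i+1)) + 3*(n:ℝ)*(γ (m+n-1) : ℝ)*u^(i+1) := by
    intro i hi
    simp only [mem_range] at hi
    unfold DD
    rw [if_neg (by omega), if_pos (by omega)]
    have h1 : 1 + i - 1 = i := by omega
    have h2 : 1 + i = i + 1 := by omega
    rw [h1, h2]
    push_cast
    ring
  have hD2 : ∀ j ∈ range (n-1), ((DD m n γ (m+1+j) : ℝ)) * u^(m+1+j)
      = 2*(m:ℝ)*((γ (m+j) : ℝ) * u^(m+j+1)) - 2*(m:ℝ)*(γ (m+n-1) : ℝ)*u^(m+j+1) := by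
    intro j hj
    unfold DD
    rw [if_neg (by omega), if_neg (by omega)]
    have h1 : m + 1 + j - 1 = m + j := by omega
    have h2 : m + 1 + j = m + j + 1 := by omega
    rw [h1, h2]
    push_cast
    ring
  rw [Finset.sum_congr rfl hD1, Finset.sum_congr rfl hD2, hD0]
  -- evaluate gen on each piece
  have hG1 : ∀ k ∈ range m, (γ k : ℝ) * gen m n k
      = 2*(γ k : ℝ) + 2*(m:ℝ)*((γ k : ℝ) * u^(k+1)) := by
    intro k hk
    simp only [mem_range] at hk
    rw [(gen_low' m n hm hn k hk).1, ← hu]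
    ring
  have hG2 : ∀ j ∈ range (n-1), (γ (m+j) : ℝ) * gen m n (m+j)
      = 3*(γ (m+j) : ℝ) + 2*(m:ℝ)*((γ (m+j) : ℝ) * u^(m+j+1)) := by
    intro j hj
    simp only [mem_range] at hj
    rw [(gen_mid' m n hm hn (m+j) (by omega) (by omega)).1, ← hu]
    ring
  have E1 : ∑ k ∈ range m, (2*(γ k:ℝ) + 2*(m:ℝ)*((γ k:ℝ)*u^(k+1)))
      = 2*(∑ k ∈ range m, (γ k:ℝ)) + 2*(m:ℝ)*(∑ k ∈ range m, (γ k:ℝ)*u^(k+1)) := by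
    rw [Finset.sum_add_distrib, ← Finset.mul_sum, ← Finset.mul_sum]
  have E2 : ∑ j ∈ range (n-1), (3*(γ (m+j):ℝ) + 2*(m:ℝ)*((γ (m+j):ℝ)*u^(m+j+1)))
      = 3*(∑ j ∈ range (n-1), (γ (m+j):ℝ))
        + 2*(m:ℝ)*(∑ j ∈ range (n-1), (γ (m+j):ℝ)*u^(m+j+1)) := by
    rw [Finset.sum_add_distrib, ← Finset.mul_sum, ← Finset.mul_sum]
  have E3 : ∑ i ∈ range m, (2*(m:ℝ)*((γ i:ℝ)*u^(i+1)) + 3*(n:ℝ)*(γ (m+n-1):ℝ)*u^(i+1))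
      = 2*(m:ℝ)*(∑ i ∈ range m, (γ i:ℝ)*u^(i+1))
        + 3*(n:ℝ)*(γ (m+n-1):ℝ)*(∑ i ∈ range m, u^(i+1)) := by
    rw [Finset.sum_add_distrib, ← Finset.mul_sum, ← Finset.mul_sum]
  have E4 : ∑ j ∈ range (n-1), (2*(m:ℝ)*((γ (m+j):ℝ)*u^(m+j+1)) - 2*(m:ℝ)*(γ (m+n-1):ℝ)*u^(m+j+1))
      = 2*(m:ℝ)*(∑ j ∈ range (n-1), (γ (m+j):ℝ)*u^(m+j+1))
        - 2*(m:ℝ)*(γ (m+n-1):ℝ)*(∑ j ∈ range (n-1), u^(m+j+1)) := by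
    rw [Finset.sum_sub_distrib, ← Finset.mul_sum, ← Finset.mul_sum]
  rw [Finset.sum_congr rfl hG1, Finset.sum_congr rfl hG2, (gen_last' m n hm hn).1,
    E1, E2, E3, E4]
  unfold eE P1 P2
  rw [← hu]
  ring
end Chunk5

section Chunk6
variable (m n : ℕ)

lemma coeff_lemma' (hm : 0 < m) (hn : 0 < n) (γ : ℕ → ℤ)
    (h : ∑ k ∈ range (m+n), (γ k : ℝ) * gen m n k = 0) :
    (∀ k < m, γ k = γ 0) ∧ (∀ k, m ≤ k → k < m+n → γ k = γ (m+n-1)) ∧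
      2*(m:ℤ)*(γ 0) + 3*(n:ℤ)*(γ (m+n-1)) = 0 := by
  have hz : ∀ p < m+n, DD m n γ p = 0 := by
    apply uu_indep m n hm hn (m+n) (DD m n γ)
    rw [claim_eq m n hm hn γ, h]
  have key1 : ∀ k < m, 2*(m:ℤ)*γ k + 3*(n:ℤ)*γ (m+n-1) = 0 := by
    intro k hk
    have hk1 := hz (k+1) (by omega)
    unfold DD at hk1
    rw [if_neg (by omega), if_pos (by omega)] at hk1
    simpa using hk1
  have hm0 : (m:ℤ) ≠ 0 := by exact_mod_cast hm.ne'
  refine ⟨?_, ?_, key1 0 hm⟩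
  · intro k hk
    have h1 := key1 k hk
    have h2 := key1 0 hm
    have h3 : 2*(m:ℤ)*(γ k - γ 0) = 0 := by linear_combination h1 - h2
    rcases mul_eq_zero.1 h3 with h4 | h4
    · exfalso; rcases mul_eq_zero.1 h4 with h5 | h5
      · norm_num at h5
      · exact hm0 h5
    · omega
  · intro k hk1 hk2
    rcases eq_or_lt_of_le (by omega : k ≤ m+n-1) with he | he
    · rw [he]
    · have hk3 := hz (k+1) (by omega)
      unfold DD at hk3
      rw [if_neg (by omega), if_neg (by omega)] at hk3
      simp only [Nat.add_sub_cancel] at hk3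
      have h3 : 2*(m:ℤ)*(γ k - γ (m+n-1)) = 0 := by linear_combination hk3
      rcases mul_eq_zero.1 h3 with h4 | h4
      · exfalso; rcases mul_eq_zero.1 h4 with h5 | h5
        · norm_num at h5
        · exact hm0 h5
      · omega
end Chunk6


section Chunk7
variable (m n : ℕ)

noncomputable def MM (m n : ℕ) : AddSubmonoid ℝ :=
  AddSubmonoid.closure (gen m n '' (Set.Iio (m+n)))

lemma gen_bdd (hm : 0 < m) (hn : 0 < n) (k : ℕ) (hk : k < m+n) :
    2 < gen m n k ∧ gen m n k < 4 := by
  rcases lt_or_ge k m with h | h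
  · have := gen_low' m n hm hn k h
    exact ⟨this.2.1, by linarith [this.2.2]⟩
  · rcases lt_or_ge (k+1) (m+n) with h2 | h2
    · have := gen_mid' m n hm hn k h h2
      exact ⟨by linarith [this.2.1], this.2.2⟩
    · have hke : k = m+n-1 := by omega
      rw [hke]
      have := gen_last' m n hm hn
      exact ⟨by linarith [this.2.1], this.2.2⟩

lemma gen_mem (k : ℕ) (hk : k < m+n) : gen m n k ∈ MM m n :=
  AddSubmonoid.subset_closure ⟨k, hk, rfl⟩

lemma mem_MM_iff (x : ℝ) : x ∈ MM m n ↔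
    ∃ z : Multiset ℝ, (∀ g ∈ z, ∃ k < m+n, g = gen m n k) ∧ z.sum = x := by
  constructor
  · intro hx
    induction hx using AddSubmonoid.closure_induction with
    | mem g hg =>
        obtain ⟨k, hk, rfl⟩ := hg
        exact ⟨{gen m n k}, by simpa using ⟨k, hk, rfl⟩, by simp⟩
    | zero => exact ⟨0, by simp⟩
    | add x y hx hy ihx ihy =>
        obtain ⟨z1, hz1, rfl⟩ := ihx
        obtain ⟨z2, hz2, rfl⟩ := ihy
        exact ⟨z1 + z2, fun g hg => by
          rcases Multiset.mem_add.1 hg with h | h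
          exacts [hz1 g h, hz2 g h], by simp⟩
  · rintro ⟨z, hz, rfl⟩
    exact multiset_sum_mem z fun g hg => by
      obtain ⟨k, hk, rfl⟩ := hz g hg
      exact gen_mem m n k hk

lemma MM_cases (hm : 0 < m) (hn : 0 < n) (x : ℝ) (hx : x ∈ MM m n) : x = 0 ∨ 2 ≤ x := by
  obtain ⟨z, hz, rfl⟩ := (mem_MM_iff m n _).1 hx
  rcases Multiset.empty_or_exists_mem z with rfl | ⟨g, hg⟩
  · left; simp
  · right
    obtain ⟨z', rfl⟩ := Multiset.exists_cons_of_mem hg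
    rw [Multiset.sum_cons]
    have h1 : 2 ≤ g := by
      obtain ⟨k, hk, rfl⟩ := hz g hg
      linarith [(gen_bdd m n hm hn k hk).1]
    have h2 : 0 ≤ z'.sum := Multiset.sum_nonneg fun a ha => by
      obtain ⟨k, hk, rfl⟩ := hz a (by simp [ha])
      linarith [(gen_bdd m n hm hn k hk).1]
    linarith

lemma MM_nonneg (hm : 0 < m) (hn : 0 < n) (x : ℝ) (hx : x ∈ MM m n) : 0 ≤ x := by
  rcases MM_cases m n hm hn x hx with rfl | h
  · exact le_refl 0
  · linarith

lemma unit_iff (hm : 0 < m) (hn : 0 < n) (a : ↥(MM m n)) : IsAddUnit a ↔ a = 0 := by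
  constructor
  · intro ha
    obtain ⟨b, hb⟩ := ha.exists_neg
    have hv : (a : ℝ) + (b : ℝ) = 0 := by
      have := congrArg (Subtype.val) hb
      push_cast at this
      exact this
    have h1 := MM_nonneg m n hm hn _ a.2
    have h2 := MM_nonneg m n hm hn _ b.2
    have : (a : ℝ) = 0 := by linarith
    exact Subtype.ext this
  · rintro rfl; exact isAddUnit_zero

lemma atom_iff (hm : 0 < m) (hn : 0 < n) (a : ↥(MM m n)) :
    IsAddAtom a ↔ ∃ k < m+n, (a:ℝ) = gen m n k := by
  constructor
  · rintro ⟨hu, hsplit⟩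
    obtain ⟨z, hz, hsum⟩ := (mem_MM_iff m n _).1 a.2
    rcases Multiset.empty_or_exists_mem z with rfl | ⟨g, hg⟩
    · exfalso; apply hu; rw [unit_iff m n hm hn]
      exact Subtype.ext (by simp at hsum; exact hsum.symm)
    · obtain ⟨z', rfl⟩ := Multiset.exists_cons_of_mem hg
      rcases Multiset.empty_or_exists_mem z' with rfl | ⟨g2, hg2⟩
      · obtain ⟨k, hk, rfl⟩ := hz g hg
        exact ⟨k, hk, by simp at hsum; exact hsum.symm⟩
      · exfalso
        have hgM : g ∈ MM m n := by
          obtain ⟨k, hk, rfl⟩ := hz g hg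
          exact gen_mem m n k hk
        have hz'M : z'.sum ∈ MM m n := (mem_MM_iff m n _).2
          ⟨z', fun g' hg' => hz g' (by simp [hg']), rfl⟩
        have := hsplit ⟨g, hgM⟩ ⟨z'.sum, hz'M⟩ (by
          apply Subtype.ext
          push_cast
          rw [← hsum, Multiset.sum_cons])
        rcases this with h | h
        · rw [unit_iff m n hm hn] at h
          have : g = 0 := congrArg Subtype.val h
          obtain ⟨k, hk, rfl⟩ := hz g hg
          linarith [(gen_bdd m n hm hn k hk).1]
        · rw [unit_iff m n hm hn] at h
          have h0 : z'.sum = 0 := congrArg Subtype.val h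
          obtain ⟨z'', rfl⟩ := Multiset.exists_cons_of_mem hg2
          rw [Multiset.sum_cons] at h0
          have h1 : 2 ≤ g2 := by
            obtain ⟨k, hk, rfl⟩ := hz g2 (by simp)
            linarith [(gen_bdd m n hm hn k hk).1]
          have h2 : 0 ≤ z''.sum := Multiset.sum_nonneg fun a ha => by
            obtain ⟨k, hk, rfl⟩ := hz a (by simp [ha])
            linarith [(gen_bdd m n hm hn k hk).1]
          linarith
  · rintro ⟨k, hk, hak⟩
    constructor
    · rw [unit_iff m n hm hn]
      intro h0
      have : (a : ℝ) = 0 := congrArg Subtype.val h0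
      rw [hak] at this
      linarith [(gen_bdd m n hm hn k hk).1]
    · intro x y hxy
      have hvals : gen m n k = (x:ℝ) + (y:ℝ) := by
        rw [← hak]; exact_mod_cast congrArg Subtype.val hxy
      rcases MM_cases m n hm hn _ x.2 with h | h
      · left; rw [unit_iff m n hm hn]; exact Subtype.ext h
      · rcases MM_cases m n hm hn _ y.2 with h2 | h2
        · right; rw [unit_iff m n hm hn]; exact Subtype.ext h2
        · exfalso
          have := (gen_bdd m n hm hn k hk).2
          linarith
end Chunk7

section Chunk8
variable (m n : ℕ)

lemma range_split_int (N1 N2 : ℕ) (f : ℕ → ℤ) :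
    ∑ k ∈ range (N1+N2), f k = (∑ k ∈ range N1, f k) + ∑ k ∈ Finset.Ico N1 (N1+N2), f k := by
  conv_lhs => rw [Finset.range_eq_Ico]
  rw [← Finset.sum_Ico_consecutive f (Nat.zero_le N1) (by omega : N1 ≤ N1+N2)]
  congr 1
  rw [← Finset.range_eq_Ico]

noncomputable def atomF (m n : ℕ) (k : ℕ) : ↥(MM m n) :=
  if h : k < m+n then ⟨gen m n k, gen_mem m n k h⟩ else 0

lemma atomF_val (k : ℕ) (hk : k < m+n) : (atomF m n k : ℝ) = gen m n k := by
  simp [atomF, hk]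

lemma atomF_isAtom (hm : 0 < m) (hn : 0 < n) (k : ℕ) (hk : k < m+n) :
    IsAddAtom (atomF m n k) :=
  (atom_iff m n hm hn _).2 ⟨k, hk, atomF_val m n k hk⟩

lemma count_rep (hm : 0 < m) (hn : 0 < n) (w : Multiset ℝ)
    (hw : ∀ g ∈ w, ∃ k < m+n, g = gen m n k) :
    w.sum = ∑ k ∈ range (m+n), ((w.count (gen m n k) : ℝ)) * gen m n k
    ∧ (Multiset.card w : ℤ) = ∑ k ∈ range (m+n), (w.count (gen m n k) : ℤ) := by
  induction w using Multiset.induction with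
  | empty => simp
  | cons a w ih =>
    obtain ⟨k0, hk0, rfl⟩ := hw a (Multiset.mem_cons_self _ _)
    obtain ⟨ih1, ih2⟩ := ih (fun g hg => hw g (Multiset.mem_cons_of_mem hg))
    have hcc : ∀ k, (gen m n k0 ::ₘ w).count (gen m n k)
        = w.count (gen m n k) + if gen m n k = gen m n k0 then 1 else 0 :=
      fun k => Multiset.count_cons _ _ _
    constructor
    · rw [Multiset.sum_cons]
      have : ∀ k ∈ range (m+n), (((gen m n k0 ::ₘ w).count (gen m n k) : ℝ)) * gen m n k
          = (w.count (gen m n k) : ℝ) * gen m n k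
            + (if gen m n k = gen m n k0 then (1:ℝ) else 0) * gen m n k := by
        intro k _
        rw [hcc k]
        push_cast [apply_ite (fun z : ℕ => (z:ℝ))]
        ring
      rw [Finset.sum_congr rfl this, Finset.sum_add_distrib, ← ih1]
      have hite : ∑ k ∈ range (m+n), (if gen m n k = gen m n k0 then (1:ℝ) else 0) * gen m n k
          = gen m n k0 := by
        rw [Finset.sum_eq_single k0]
        · simp
        · intro k hk hne
          have : gen m n k ≠ gen m n k0 := fun he =>
            hne (gen_inj' m n hm hn k k0 (by simpa using hk) hk0 he)
          simp [this]
        · intro hmem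
          exact absurd (Finset.mem_range.2 hk0) hmem
      rw [hite]
      ring
    · rw [Multiset.card_cons]
      have : ∀ k ∈ range (m+n), ((gen m n k0 ::ₘ w).count (gen m n k) : ℤ)
          = (w.count (gen m n k) : ℤ) + (if gen m n k = gen m n k0 then (1:ℤ) else 0) := by
        intro k _
        rw [hcc k]
        push_cast [apply_ite (fun z : ℕ => (z:ℤ))]
        ring
      rw [Finset.sum_congr rfl this, Finset.sum_add_distrib, ← ih2]
      have hite : ∑ k ∈ range (m+n), (if gen m n k = gen m n k0 then (1:ℤ) else 0) = 1 := by
        rw [Finset.sum_eq_single k0]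
        · simp
        · intro k hk hne
          have : gen m n k ≠ gen m n k0 := fun he =>
            hne (gen_inj' m n hm hn k k0 (by simpa using hk) hk0 he)
          simp [this]
        · intro hmem
          exact absurd (Finset.mem_range.2 hk0) hmem
      rw [hite]
      push_cast
      ring

lemma mem_z_iff (z : Multiset ↥(MM m n)) (k : ℕ) (hk : k < m+n) :
    gen m n k ∈ z.map (fun a : ↥(MM m n) => (a : ℝ)) ↔ atomF m n k ∈ z := by
  constructor
  · intro h
    obtain ⟨a, ha, hav⟩ := Multiset.mem_map.1 h
    have he : a = atomF m n k := Subtype.ext (hav.trans (atomF_val m n k hk).symm)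
    rwa [he] at ha
  · intro h
    exact Multiset.mem_map.2 ⟨atomF m n k, h, atomF_val m n k hk⟩

lemma fact_vals (hm : 0 < m) (hn : 0 < n) (x : ↥(MM m n)) (z : Multiset ↥(MM m n))
    (hz : IsFactorizationOf z x) :
    (∀ g ∈ z.map (fun a : ↥(MM m n) => (a : ℝ)), ∃ k < m+n, g = gen m n k)
    ∧ (z.map (fun a : ↥(MM m n) => (a : ℝ))).sum = (x : ℝ)
    ∧ Multiset.card (z.map (fun a : ↥(MM m n) => (a : ℝ))) = Multiset.card z := by
  refine ⟨?_, ?_, by simp⟩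
  · intro g hg
    obtain ⟨a, ha, hav⟩ := Multiset.mem_map.1 hg
    obtain ⟨k, hk, hak⟩ := (atom_iff m n hm hn a).1 (hz.1 a ha)
    exact ⟨k, hk, by rw [← hav, hak]⟩
  · rw [← hz.2]
    exact (map_multiset_sum (AddSubmonoidClass.subtype (MM m n)) z).symm

/-- The master length comparison lemma. -/
lemma length_compare (hm : 0 < m) (hn : 0 < n) (x : ↥(MM m n)) (z₁ z₂ : Multiset ↥(MM m n))
    (h₁ : IsFactorizationOf z₁ x) (h₂ : IsFactorizationOf z₂ x) (hir : Irredundant z₁ z₂) :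
    (∀ i < m, atomF m n i ∈ z₁ → Multiset.card z₂ < Multiset.card z₁)
    ∧ (∀ j, m ≤ j → j < m+n → atomF m n j ∈ z₁ → Multiset.card z₁ < Multiset.card z₂) := by
  set w₁ := z₁.map (fun a : ↥(MM m n) => (a : ℝ)) with hw₁
  set w₂ := z₂.map (fun a : ↥(MM m n) => (a : ℝ)) with hw₂
  obtain ⟨hv₁, hs₁, hc₁⟩ := fact_vals m n hm hn x z₁ h₁
  obtain ⟨hv₂, hs₂, hc₂⟩ := fact_vals m n hm hn x z₂ h₂
  obtain ⟨rep₁, card₁⟩ := count_rep m n hm hn w₁ hv₁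
  obtain ⟨rep₂, card₂⟩ := count_rep m n hm hn w₂ hv₂
  set γ : ℕ → ℤ := fun k => (w₁.count (gen m n k) : ℤ) - (w₂.count (gen m n k) : ℤ) with hγ
  have hγ0 : ∑ k ∈ range (m+n), (γ k : ℝ) * gen m n k = 0 := by
    have : ∀ k ∈ range (m+n), (γ k : ℝ) * gen m n k
        = (w₁.count (gen m n k) : ℝ) * gen m n k
          - (w₂.count (gen m n k) : ℝ) * gen m n k := by
      intro k _
      simp only [hγ]
      push_cast
      ring
    rw [Finset.sum_congr rfl this, Finset.sum_sub_distrib, ← rep₁, ← rep₂, hs₁, hs₂]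
    ring
  obtain ⟨hA, hB, hAB⟩ := coeff_lemma' m n hm hn γ hγ0
  set A := γ 0 with hA'
  set B := γ (m+n-1) with hB'
  -- total length difference
  have hlen : 3*((Multiset.card z₁ : ℤ) - (Multiset.card z₂ : ℤ)) = m * A := by
    have h1 : (Multiset.card z₁ : ℤ) - (Multiset.card z₂ : ℤ)
        = ∑ k ∈ range (m+n), γ k := by
      rw [← hc₁, ← hc₂, card₁, card₂, ← Finset.sum_sub_distrib]
    have h2 : ∑ k ∈ range (m+n), γ k = m * A + n * B := by
      rw [range_split_int m n γ]
      congr 1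
      · rw [Finset.sum_congr rfl (fun k hk => hA k (Finset.mem_range.1 hk))]
        simp [mul_comm]
      · rw [Finset.sum_congr rfl (fun k hk => by
          have := Finset.mem_Ico.1 hk
          exact hB k this.1 this.2)]
        simp [mul_comm]
    rw [h1, h2]
    linarith [hAB]
  -- irredundancy: counts
  have hcount : ∀ k < m+n, atomF m n k ∈ z₁ → 0 < γ k := by
    intro k hk hmem
    have h1 : 0 < w₁.count (gen m n k) :=
      Multiset.count_pos.2 ((mem_z_iff m n z₁ k hk).2 hmem)
    have h2 : w₂.count (gen m n k) = 0 := by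
      rw [Multiset.count_eq_zero]
      intro hmem2
      exact hir _ hmem ((mem_z_iff m n z₂ k hk).1 hmem2)
    simp only [hγ, h2]
    omega
  have hmZ : (0:ℤ) < m := by exact_mod_cast hm
  have hnZ : (0:ℤ) < n := by exact_mod_cast hn
  constructor
  · intro i hi hmem
    have hpos : 0 < γ i := hcount i (by omega) hmem
    have : γ i = A := hA i hi
    have hApos : 0 < A := by omega
    have : 0 < m * A := mul_pos hmZ hApos
    omega
  · intro j hj1 hj2 hmem
    have hpos : 0 < γ j := hcount j hj2 hmem
    have : γ j = B := hB j hj1 hj2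
    have hBpos : 0 < B := by omega
    have h3 : 2*(m:ℤ)*A = -(3*n*B) := by linarith
    have h4 : (0:ℤ) < 3*n*B := by positivity
    have h5 : A < 0 := by nlinarith
    have : m * A < 0 := mul_neg_of_pos_of_neg hmZ h5
    omega
end Chunk8

section Chunk9
variable (m n : ℕ)

lemma msum_sum {ι α : Type*} [AddCommMonoid α] (s : Finset ι) (f : ι → Multiset α) :
    (∑ i ∈ s, f i).sum = ∑ i ∈ s, (f i).sum := by
  induction s using Finset.cons_induction with
  | empty => simp
  | cons a t ha ih => rw [Finset.sum_cons, Finset.sum_cons, Multiset.sum_add, ih]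

lemma mcard_sum {ι α : Type*} (s : Finset ι) (f : ι → Multiset α) :
    Multiset.card (∑ i ∈ s, f i) = ∑ i ∈ s, Multiset.card (f i) := by
  induction s using Finset.cons_induction with
  | empty => simp
  | cons a t ha ih => rw [Finset.sum_cons, Finset.sum_cons, Multiset.card_add, ih]

noncomputable def Z1 (m n : ℕ) : Multiset ↥(MM m n) :=
  ∑ i ∈ range m, Multiset.replicate (3*n) (atomF m n i)

noncomputable def Z2 (m n : ℕ) : Multiset ↥(MM m n) :=
  ∑ j ∈ range n, Multiset.replicate (2*m) (atomF m n (m+j))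

lemma mem_Z1 (hm : 0 < m) (hn : 0 < n) (a : ↥(MM m n)) :
    a ∈ Z1 m n ↔ ∃ i < m, a = atomF m n i := by
  unfold Z1
  rw [Multiset.mem_sum]
  constructor
  · rintro ⟨i, hi, hmem⟩
    exact ⟨i, Finset.mem_range.1 hi, (Multiset.eq_of_mem_replicate hmem)⟩
  · rintro ⟨i, hi, rfl⟩
    exact ⟨i, Finset.mem_range.2 hi, Multiset.mem_replicate.2 ⟨by positivity, rfl⟩⟩

lemma mem_Z2 (hm : 0 < m) (hn : 0 < n) (a : ↥(MM m n)) :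
    a ∈ Z2 m n ↔ ∃ j < n, a = atomF m n (m+j) := by
  unfold Z2
  rw [Multiset.mem_sum]
  constructor
  · rintro ⟨j, hj, hmem⟩
    exact ⟨j, Finset.mem_range.1 hj, (Multiset.eq_of_mem_replicate hmem)⟩
  · rintro ⟨j, hj, rfl⟩
    exact ⟨j, Finset.mem_range.2 hj, Multiset.mem_replicate.2 ⟨by positivity, rfl⟩⟩

lemma Z1_sum_val (hm : 0 < m) (hn : 0 < n) :
    (((Z1 m n).sum : ↥(MM m n)) : ℝ) = 3*n*∑ i ∈ range m, gen m n i := by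
  unfold Z1
  rw [msum_sum]
  have : ∀ i ∈ range m, (Multiset.replicate (3*n) (atomF m n i)).sum
      = (3*n) • atomF m n i := fun i _ => Multiset.sum_replicate _ _
  rw [Finset.sum_congr rfl this, AddSubmonoidClass.coe_finset_sum]
  have h2 : ∀ i ∈ range m, ((((3*n) • atomF m n i : ↥(MM m n))) : ℝ) = 3*(n:ℝ) * gen m n i := by
    intro i hi
    rw [AddSubmonoidClass.coe_nsmul, nsmul_eq_mul, atomF_val m n i (by
      simp only [Finset.mem_range] at hi; omega)]
    push_cast
    ring
  rw [Finset.sum_congr rfl h2, ← Finset.mul_sum]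

lemma Z2_sum_val (hm : 0 < m) (hn : 0 < n) :
    (((Z2 m n).sum : ↥(MM m n)) : ℝ) = 2*m*∑ j ∈ range n, gen m n (m+j) := by
  unfold Z2
  rw [msum_sum]
  have : ∀ j ∈ range n, (Multiset.replicate (2*m) (atomF m n (m+j))).sum
      = (2*m) • atomF m n (m+j) := fun j _ => Multiset.sum_replicate _ _
  rw [Finset.sum_congr rfl this, AddSubmonoidClass.coe_finset_sum]
  have h2 : ∀ j ∈ range n, ((((2*m) • atomF m n (m+j) : ↥(MM m n))) : ℝ)
      = 2*(m:ℝ) * gen m n (m+j) := by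
    intro j hj
    rw [AddSubmonoidClass.coe_nsmul, nsmul_eq_mul, atomF_val m n (m+j) (by
      simp only [Finset.mem_range] at hj; omega)]
    push_cast
    ring
  rw [Finset.sum_congr rfl h2, ← Finset.mul_sum]

lemma Z12 (hm : 0 < m) (hn : 0 < n) : (Z1 m n).sum = (Z2 m n).sum := by
  apply Subtype.ext
  rw [Z1_sum_val m n hm hn, Z2_sum_val m n hm hn]
  exact relation_eq' m n hm hn

lemma Z1_card : Multiset.card (Z1 m n) = m*(3*n) := by
  unfold Z1
  rw [mcard_sum]
  simp [Multiset.card_replicate]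

lemma Z2_card : Multiset.card (Z2 m n) = n*(2*m) := by
  unfold Z2
  rw [mcard_sum]
  simp [Multiset.card_replicate]

lemma Z1_fact (hm : 0 < m) (hn : 0 < n) : IsFactorizationOf (Z1 m n) (Z1 m n).sum := by
  refine ⟨?_, rfl⟩
  intro a ha
  obtain ⟨i, hi, rfl⟩ := (mem_Z1 m n hm hn a).1 ha
  exact atomF_isAtom m n hm hn i (by omega)

lemma Z2_fact (hm : 0 < m) (hn : 0 < n) : IsFactorizationOf (Z2 m n) (Z2 m n).sum := by
  refine ⟨?_, rfl⟩
  intro a ha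
  obtain ⟨j, hj, rfl⟩ := (mem_Z2 m n hm hn a).1 ha
  exact atomF_isAtom m n hm hn (m+j) (by omega)

lemma atomF_inj (hm : 0 < m) (hn : 0 < n) (k1 k2 : ℕ) (h1 : k1 < m+n) (h2 : k2 < m+n)
    (he : atomF m n k1 = atomF m n k2) : k1 = k2 := by
  apply gen_inj' m n hm hn k1 k2 h1 h2
  rw [← atomF_val m n k1 h1, ← atomF_val m n k2 h2, he]

lemma Z12_irred (hm : 0 < m) (hn : 0 < n) :
    Irredundant (Z1 m n) (Z2 m n) ∧ Irredundant (Z2 m n) (Z1 m n) := by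
  have key : ∀ a, a ∈ Z1 m n → a ∈ Z2 m n → False := by
    intro a h1 h2
    obtain ⟨i, hi, rfl⟩ := (mem_Z1 m n hm hn a).1 h1
    obtain ⟨j, hj, he⟩ := (mem_Z2 m n hm hn _).1 h2
    have := atomF_inj m n hm hn i (m+j) (by omega) (by omega) he
    omega
  exact ⟨fun a ha hb => key a ha hb, fun a ha hb => key a hb ha⟩

lemma p_ne_zero_val (hm : 0 < m) (hn : 0 < n) (p : ↥(MM m n)) (hp : ¬IsAddUnit p) :
    2 ≤ (p : ℝ) := by
  rcases MM_cases m n hm hn _ p.2 with h | h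
  · exact absurd ((unit_iff m n hm hn p).2 (Subtype.ext h)) hp
  · exact h

lemma dvd_sum_mem (hm : 0 < m) (hn : 0 < n) (p : ↥(MM m n)) (hp : IsAddPrime p)
    (W : Multiset ↥(MM m n)) (hd : AddDvd p W.sum) : ∃ a ∈ W, AddDvd p a := by
  induction W using Multiset.induction with
  | empty =>
    exfalso
    obtain ⟨c, hc⟩ := hd
    have hv : (0:ℝ) = (p : ℝ) + (c : ℝ) := by
      have := congrArg Subtype.val hc
      simpa using this
    have h1 := p_ne_zero_val m n hm hn p hp.1
    have h2 := MM_nonneg m n hm hn _ c.2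
    linarith
  | cons a W ih =>
    rw [Multiset.sum_cons] at hd
    rcases hp.2 a W.sum hd with h | h
    · exact ⟨a, Multiset.mem_cons_self _ _, h⟩
    · obtain ⟨b, hb, hbd⟩ := ih h
      exact ⟨b, Multiset.mem_cons_of_mem hb, hbd⟩

lemma gen_gt3 (hm : 0 < m) (hn : 0 < n) (k : ℕ) (hk1 : m ≤ k) (hk2 : k < m+n) :
    3 < gen m n k := by
  rcases lt_or_ge (k+1) (m+n) with h | h
  · exact (gen_mid' m n hm hn k hk1 h).2.1
  · have : k = m+n-1 := by omega
    rw [this]; exact (gen_last' m n hm hn).2.1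

lemma not_prime_atomF (hm : 0 < m) (hn : 0 < n) (k : ℕ) (hk : k < m+n) :
    ¬IsAddPrime (atomF m n k) := by
  intro hp
  rcases lt_or_ge k m with hkm | hkm
  · -- long atom: divides Z2.sum
    have hmem : atomF m n k ∈ Z1 m n := (mem_Z1 m n hm hn _).2 ⟨k, hkm, rfl⟩
    obtain ⟨W, hW⟩ := Multiset.exists_cons_of_mem hmem
    have hdvd : AddDvd (atomF m n k) (Z2 m n).sum := by
      refine ⟨W.sum, ?_⟩
      rw [← Z12 m n hm hn, hW, Multiset.sum_cons]
    obtain ⟨a, ha, c, hc⟩ := dvd_sum_mem m n hm hn _ hp _ hdvd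
    obtain ⟨j, hj, rfl⟩ := (mem_Z2 m n hm hn a).1 ha
    have hv : gen m n (m+j) = gen m n k + (c : ℝ) := by
      have h0 := congrArg Subtype.val hc
      push_cast at h0
      rwa [atomF_val m n (m+j) (by omega), atomF_val m n k hk] at h0
    have h1 : gen m n k < 3 := (gen_low' m n hm hn k hkm).2.2
    have h2 : 2 < gen m n k := (gen_low' m n hm hn k hkm).2.1
    have h3 : 3 < gen m n (m+j) := gen_gt3 m n hm hn (m+j) (by omega) (by omega)
    have h4 : gen m n (m+j) < 4 := (gen_bdd m n hm hn (m+j) (by omega)).2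
    rcases MM_cases m n hm hn _ c.2 with h5 | h5
    · rw [h5, add_zero] at hv
      have := gen_inj' m n hm hn (m+j) k (by omega) hk hv
      omega
    · linarith
  · -- short atom: divides Z1.sum
    have hmem : atomF m n k ∈ Z2 m n := (mem_Z2 m n hm hn _).2 ⟨k-m, by omega, by
      congr 1; omega⟩
    obtain ⟨W, hW⟩ := Multiset.exists_cons_of_mem hmem
    have hdvd : AddDvd (atomF m n k) (Z1 m n).sum := by
      refine ⟨W.sum, ?_⟩
      rw [Z12 m n hm hn, hW, Multiset.sum_cons]
    obtain ⟨a, ha, c, hc⟩ := dvd_sum_mem m n hm hn _ hp _ hdvd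
    obtain ⟨i, hi, rfl⟩ := (mem_Z1 m n hm hn a).1 ha
    have hv : gen m n i = gen m n k + (c : ℝ) := by
      have h0 := congrArg Subtype.val hc
      push_cast at h0
      rwa [atomF_val m n i (by omega), atomF_val m n k hk] at h0
    have h1 : gen m n i < 3 := (gen_low' m n hm hn i hi).2.2
    have h3 : 3 < gen m n k := gen_gt3 m n hm hn k hkm hk
    have h5 := MM_nonneg m n hm hn _ c.2
    linarith

lemma isPurelyLong_atomF (hm : 0 < m) (hn : 0 < n) (i : ℕ) (hi : i < m) :
    IsPurelyLong (atomF m n i) := by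
  refine ⟨atomF_isAtom m n hm hn i (by omega), not_prime_atomF m n hm hn i (by omega),
    ?_⟩
  intro x z₁ z₂ h1 h2 hir hmem
  exact (length_compare m n hm hn x z₁ z₂ h1 h2 hir).1 i hi hmem

lemma isPurelyShort_atomF (hm : 0 < m) (hn : 0 < n) (j : ℕ) (hj1 : m ≤ j) (hj2 : j < m+n) :
    IsPurelyShort (atomF m n j) := by
  refine ⟨atomF_isAtom m n hm hn j hj2, not_prime_atomF m n hm hn j hj2, ?_⟩
  intro x z₁ z₂ h1 h2 hir hmem
  exact (length_compare m n hm hn x z₁ z₂ h1 h2 hir).2 j hj1 hj2 hmem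

lemma not_long_short (hm : 0 < m) (hn : 0 < n) :
    (∀ j, m ≤ j → j < m+n → ¬IsPurelyLong (atomF m n j))
    ∧ (∀ i < m, ¬IsPurelyShort (atomF m n i)) := by
  have hZ2fact' : IsFactorizationOf (Z2 m n) (Z1 m n).sum := by
    rw [Z12 m n hm hn]; exact Z2_fact m n hm hn
  constructor
  · intro j hj1 hj2 hpl
    have := hpl.2.2 ((Z1 m n).sum) (Z2 m n) (Z1 m n) hZ2fact' (Z1_fact m n hm hn)
      (Z12_irred m n hm hn).2 ((mem_Z2 m n hm hn _).2 ⟨j-m, by omega, by congr 1; omega⟩)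
    rw [Z1_card, Z2_card] at this
    nlinarith
  · intro i hi hps
    have := hps.2.2 ((Z1 m n).sum) (Z1 m n) (Z2 m n) (Z1_fact m n hm hn) hZ2fact'
      (Z12_irred m n hm hn).1 ((mem_Z1 m n hm hn _).2 ⟨i, hi, rfl⟩)
    rw [Z1_card, Z2_card] at this
    nlinarith
end Chunk9

section Final
variable (m n : ℕ)

lemma long_set (hm : 0 < m) (hn : 0 < n) :
    {a : ↥(MM m n) | IsPurelyLong a} = ↑((range m).image (atomF m n)) := by
  ext a
  simp only [Set.mem_setOf_eq, Finset.coe_image, Set.mem_image, Finset.mem_coe,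
    Finset.mem_range]
  constructor
  · intro h
    obtain ⟨k, hk, hak⟩ := (atom_iff m n hm hn a).1 h.1
    have ha : a = atomF m n k := Subtype.ext (by rw [hak, atomF_val m n k hk])
    rcases lt_or_ge k m with hkm | hkm
    · exact ⟨k, hkm, ha.symm⟩
    · exfalso
      rw [ha] at h
      exact (not_long_short m n hm hn).1 k hkm hk h
  · rintro ⟨i, hi, rfl⟩
    exact isPurelyLong_atomF m n hm hn i hi

lemma short_set (hm : 0 < m) (hn : 0 < n) :
    {a : ↥(MM m n) | IsPurelyShort a} = ↑((Finset.Ico m (m+n)).image (atomF m n)) := by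
  ext a
  simp only [Set.mem_setOf_eq, Finset.coe_image, Set.mem_image, Finset.mem_coe,
    Finset.mem_Ico]
  constructor
  · intro h
    obtain ⟨k, hk, hak⟩ := (atom_iff m n hm hn a).1 h.1
    have ha : a = atomF m n k := Subtype.ext (by rw [hak, atomF_val m n k hk])
    rcases lt_or_ge k m with hkm | hkm
    · exfalso
      rw [ha] at h
      exact (not_long_short m n hm hn).2 k hkm h
    · exact ⟨k, ⟨hkm, hk⟩, ha.symm⟩
  · rintro ⟨j, ⟨hj1, hj2⟩, rfl⟩
    exact isPurelyShort_atomF m n hm hn j hj1 hj2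

end Final


end AuxPureAtoms



/-- For every pair `(m, n)` of positive integers there is a (cancellative commutative)
monoid — indeed an additive submonoid of the nonnegative real numbers — having exactly
`m` purely long atoms and exactly `n` purely short atoms. -/
theorem exists_monoid_with_prescribed_pure_atoms (m n : ℕ) (hm : 0 < m) (hn : 0 < n) :
    ∃ M : AddSubmonoid ℝ, (∀ x ∈ M, (0 : ℝ) ≤ x) ∧
      {a : ↥M | IsPurelyLong a}.Finite ∧ {a : ↥M | IsPurelyShort a}.Finite ∧
      {a : ↥M | IsPurelyLong a}.ncard = m ∧ {a : ↥M | IsPurelyShort a}.ncard = n := by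

  refine ⟨MM m n, fun x hx => MM_nonneg m n hm hn x hx, ?_, ?_, ?_, ?_⟩
  · rw [long_set m n hm hn]; exact Finset.finite_toSet _
  · rw [short_set m n hm hn]; exact Finset.finite_toSet _
  · rw [long_set m n hm hn, Set.ncard_coe_finset,
      Finset.card_image_of_injOn (fun x hx y hy he =>
        atomF_inj m n hm hn x y (by simp at hx; omega) (by simp at hy; omega) he),
      Finset.card_range]
  · rw [short_set m n hm hn, Set.ncard_coe_finset,
      Finset.card_image_of_injOn (fun x hx y hy he =>
        atomF_inj m n hm hn x y (by simp at hx; omega) (by simp at hy; omega) he),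
      Nat.card_Ico]
    omega
end

section
/- Let M = ℕ₀ \ {1} (the additive monoid of nonnegative integers except 1) and let N = {(0,0)} ∪ (ℕ₀ × ℕ), an additive submonoid of ℤ². Then the direct product monoid M × N is atomic; its purely long atoms are exactly {(2, (0,0))} and its purely short atoms are exactly {(3, (0,0))} (so M × N is a PLS monoid); M × N is a finite factorization monoid; and M × N is not a length-factorial monoid, since the element (0, (2,2)) has the two distinct equal-length factorizations (0,(0,1)) + (0,(2,1)) and (0,(1,1)) + (0,(1,1)). -/
section Defs

variable {M : Type*} [AddCommMonoid M]

/-- `M` is a finite factorization monoid: it is atomic and every element has only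
finitely many factorizations. -/
def IsFFM (M : Type*) [AddCommMonoid M] : Prop :=
  IsAddAtomic M ∧ ∀ x : M, {z : Multiset M | IsFactorizationOf z x}.Finite

end Defs

/-- The additive monoid `M = ℕ₀ \ {1}`, as a submonoid of `ℕ`. -/
def Mnum : AddSubmonoid ℕ where
  carrier := {k : ℕ | k ≠ 1}
  zero_mem' := by simp
  add_mem' := by
    intro a b ha hb
    simp only [Set.mem_setOf_eq] at *
    omega

/-- The additive monoid `N = {(0,0)} ∪ (ℕ₀ × ℕ)`, as a submonoid of `ℤ²`. -/
def Nsub : AddSubmonoid (ℤ × ℤ) where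
  carrier := {p : ℤ × ℤ | p = 0 ∨ (0 ≤ p.1 ∧ 0 < p.2)}
  zero_mem' := Or.inl rfl
  add_mem' := by
    rintro p q (rfl | hp) hq
    · simpa using hq
    · rcases hq with rfl | hq
      · exact Or.inr (by simpa using hp)
      · exact Or.inr ⟨by simpa using add_nonneg hp.1 hq.1,
          by simpa using add_pos hp.2 hq.2⟩

/-- The direct product monoid `M × N` of Example 3.2, and designated elements of it. -/
abbrev MN : Type := ↥Mnum × ↥Nsub

/-- The atom `(2, (0,0))` of `M × N`. -/
def aTwo : MN := (⟨2, show (2:ℕ) ≠ 1 by decide⟩, 0)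

/-- The atom `(3, (0,0))` of `M × N`. -/
def aThree : MN := (⟨3, show (3:ℕ) ≠ 1 by decide⟩, 0)

/-- The atom `(0, (0,1))` of `M × N`. -/
def e01 : MN := (0, ⟨(0, 1), Or.inr ⟨le_refl 0, one_pos⟩⟩)

/-- The atom `(0, (1,1))` of `M × N`. -/
def e11 : MN := (0, ⟨(1, 1), Or.inr ⟨by norm_num, one_pos⟩⟩)

/-- The atom `(0, (2,1))` of `M × N`. -/
def e21 : MN := (0, ⟨(2, 1), Or.inr ⟨by norm_num, one_pos⟩⟩)

/-- The element `(0, (2,2))` of `M × N`. -/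
def x22 : MN := (0, ⟨(2, 2), Or.inr ⟨by norm_num, by norm_num⟩⟩)

/-!
Write elements of `M × N` as `(m, (a, b))`. The atoms are `(2, 0)`, `(3, 0)` and the
`(0, (c, 1))`, so in a factorization `m` counts `2·#(2,0) + 3·#(3,0)` while `b` counts the
remaining factors. For two factorizations `z₁, z₂` of one element this gives
`3 (|z₁| - |z₂|) = #₁(2,0) - #₂(2,0)` and `2 (|z₁| - |z₂|) = #₂(3,0) - #₁(3,0)`:
in an irredundant relation `(2, 0)` only occurs on the longer side and `(3, 0)` only on
the shorter. The relations `3·(2,0) = 2·(3,0)` and `(0,(c,1)) + (0,(c+2,1)) = 2·(0,(c+1,1))` exclude all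
other atoms, and the latter at `c = 0` breaks length-factoriality. Atomicity and finiteness
of factorizations come from the length `m + b`, which vanishes only at `0` and bounds the
length of factorizations, together with `a`, which bounds the atoms that can occur.
-/

section AddCommMonoid

variable {M : Type*} [AddCommMonoid M]

theorem isAddAtom_iff_of_subsingleton [Subsingleton (AddUnits M)] {a : M} :
    IsAddAtom a ↔ a ≠ 0 ∧ ∀ x y : M, a = x + y → x = 0 ∨ y = 0 := by
  simp only [IsAddAtom, isAddUnit_iff_eq_zero]

theorem AddUnits.subsingleton_of_length (ℓ : M →+ ℕ) (hℓ : ∀ x, ℓ x = 0 → x = 0) :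
    Subsingleton (AddUnits M) := by
  refine ⟨fun u v => ?_⟩
  have h : ∀ w : AddUnits M, w = 0 := fun w => AddUnits.ext <| hℓ w <| by
    have := congrArg ℓ w.val_neg
    rw [map_add, map_zero] at this
    omega
  rw [h u, h v]

theorem isAddAtomic_of_length (ℓ : M →+ ℕ) (hℓ : ∀ x, ℓ x = 0 → x = 0) :
    IsAddAtomic M := by
  have := AddUnits.subsingleton_of_length ℓ hℓ
  intro x hx
  induction hn : ℓ x using Nat.strong_induction_on generalizing x with
  | _ n ih =>
    by_cases hatom : IsAddAtom x
    · exact ⟨{x}, by simpa [IsFactorizationOf] using hatom⟩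
    rw [isAddUnit_iff_eq_zero] at hx
    obtain ⟨y, z, rfl, hy, hz⟩ : ∃ y z, x = y + z ∧ y ≠ 0 ∧ z ≠ 0 := by
      simpa [isAddAtom_iff_of_subsingleton, hx, not_or] using hatom
    have hℓy : ℓ y ≠ 0 := fun h => hy (hℓ y h)
    have hℓz : ℓ z ≠ 0 := fun h => hz (hℓ z h)
    rw [map_add] at hn
    obtain ⟨zy, hzy, rfl⟩ := ih (ℓ y) (by omega) y (by rwa [isAddUnit_iff_eq_zero]) rfl
    obtain ⟨zz, hzz, rfl⟩ := ih (ℓ z) (by omega) z (by rwa [isAddUnit_iff_eq_zero]) rfl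
    exact ⟨zy + zz, fun a ha => (Multiset.mem_add.1 ha).elim (hzy a) (hzz a),
      Multiset.sum_add _ _⟩

theorem isFactorizationOf_replicate {a : M} (n : ℕ) (ha : IsAddAtom a) :
    IsFactorizationOf (Multiset.replicate n a) (n • a) :=
  ⟨fun _ hb => Multiset.eq_of_mem_replicate hb ▸ ha, Multiset.sum_replicate n a⟩

end AddCommMonoid

theorem irredundant_replicate {α : Type*} {a b : α} (hab : a ≠ b) (m n : ℕ) :
    Irredundant (Multiset.replicate m a) (Multiset.replicate n b) := fun _ hu hv =>
  hab ((Multiset.eq_of_mem_replicate hu).symm.trans (Multiset.eq_of_mem_replicate hv))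

theorem Multiset.finite_setOf_card_le_of_forall_mem {α : Type*} {S : Set α} (hS : S.Finite)
    (n : ℕ) : {z : Multiset α | card z ≤ n ∧ ∀ a ∈ z, a ∈ S}.Finite := by
  classical
  refine ((n • hS.toFinset.val).powerset.finite_toSet).subset ?_
  rintro z ⟨hcard, hzS⟩
  show z ∈ powerset _
  rw [mem_powerset, le_iff_count]
  intro a
  by_cases ha : a ∈ z
  · calc count a z ≤ card z := count_le_card a z
      _ ≤ n := hcard
      _ ≤ n * count a hS.toFinset.val :=
          Nat.le_mul_of_pos_right n (count_pos.2 (by simpa using hzS a ha))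
      _ = count a (n • hS.toFinset.val) := (count_nsmul a n _).symm
  · simp [count_eq_zero.2 ha]

namespace Nsub

theorem fst_nonneg (p : Nsub) : 0 ≤ (p : ℤ × ℤ).1 := by
  rcases p.2 with h | h
  · simp [h]
  · exact h.1

theorem snd_nonneg (p : Nsub) : 0 ≤ (p : ℤ × ℤ).2 := by
  rcases p.2 with h | h
  · simp [h]
  · exact h.2.le

theorem fst_eq_zero_of_snd_eq_zero {p : Nsub} (h : (p : ℤ × ℤ).2 = 0) :
    (p : ℤ × ℤ).1 = 0 := by
  rcases p.2 with hp | hp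
  · simp [hp]
  · omega

end Nsub

namespace MN

def mCoord : MN →+ ℕ where
  toFun x := x.1
  map_zero' := rfl
  map_add' _ _ := rfl

def aCoord : MN →+ ℕ where
  toFun x := (x.2 : ℤ × ℤ).1.toNat
  map_zero' := rfl
  map_add' x y := Int.toNat_add (Nsub.fst_nonneg x.2) (Nsub.fst_nonneg y.2)

def bCoord : MN →+ ℕ where
  toFun x := (x.2 : ℤ × ℤ).2.toNat
  map_zero' := rfl
  map_add' x y := Int.toNat_add (Nsub.snd_nonneg x.2) (Nsub.snd_nonneg y.2)

/-- The element `(m, (a, b))`; `b = 0 → a = 0` is what membership in `N` asks of `a, b ≥ 0`. -/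
def mk (m a b : ℕ) (hm : m ≠ 1) (hab : b = 0 → a = 0) : MN :=
  (⟨m, hm⟩, ⟨((a : ℤ), (b : ℤ)), by
    rcases Nat.eq_zero_or_pos b with hb | hb
    · exact Or.inl (by simp [hb, hab hb])
    · exact Or.inr ⟨by positivity, by simpa using hb⟩⟩)

def eAtom (c : ℕ) : MN := mk 0 c 1 (by decide) (by simp)

@[simp] theorem mCoord_mk (m a b : ℕ) (hm hab) : mCoord (mk m a b hm hab) = m := rfl
@[simp] theorem aCoord_mk (m a b : ℕ) (hm hab) : aCoord (mk m a b hm hab) = a :=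
  Int.toNat_natCast a
@[simp] theorem bCoord_mk (m a b : ℕ) (hm hab) : bCoord (mk m a b hm hab) = b :=
  Int.toNat_natCast b

@[simp] theorem mCoord_aTwo : mCoord aTwo = 2 := rfl
@[simp] theorem aCoord_aTwo : aCoord aTwo = 0 := rfl
@[simp] theorem bCoord_aTwo : bCoord aTwo = 0 := rfl
@[simp] theorem mCoord_aThree : mCoord aThree = 3 := rfl
@[simp] theorem aCoord_aThree : aCoord aThree = 0 := rfl
@[simp] theorem bCoord_aThree : bCoord aThree = 0 := rfl
@[simp] theorem mCoord_eAtom (c : ℕ) : mCoord (eAtom c) = 0 := rfl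
@[simp] theorem aCoord_eAtom (c : ℕ) : aCoord (eAtom c) = c := aCoord_mk ..
@[simp] theorem bCoord_eAtom (c : ℕ) : bCoord (eAtom c) = 1 := rfl

theorem mCoord_ne_one (x : MN) : mCoord x ≠ 1 := x.1.2

theorem aCoord_eq_zero_of_bCoord_eq_zero {x : MN} (h : bCoord x = 0) : aCoord x = 0 := by
  have := Nsub.snd_nonneg x.2
  have : (x.2 : ℤ × ℤ).2 = 0 := by
    simp only [bCoord, AddMonoidHom.coe_mk, ZeroHom.coe_mk] at h
    omega
  simp [aCoord, Nsub.fst_eq_zero_of_snd_eq_zero this]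

theorem ext_coord {x y : MN} (hm : mCoord x = mCoord y) (ha : aCoord x = aCoord y)
    (hb : bCoord x = bCoord y) : x = y := by
  have := Nsub.fst_nonneg x.2; have := Nsub.fst_nonneg y.2
  have := Nsub.snd_nonneg x.2; have := Nsub.snd_nonneg y.2
  simp only [mCoord, aCoord, bCoord, AddMonoidHom.coe_mk, ZeroHom.coe_mk] at hm ha hb
  exact Prod.ext (Subtype.ext hm) (Subtype.ext (Prod.ext (by omega) (by omega)))

theorem eq_zero_iff {x : MN} : x = 0 ↔ mCoord x = 0 ∧ bCoord x = 0 := by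
  refine ⟨by rintro rfl; simp, fun ⟨hm, hb⟩ => ext_coord ?_ ?_ ?_⟩ <;>
    simp [hm, hb, aCoord_eq_zero_of_bCoord_eq_zero hb]

def length : MN →+ ℕ := mCoord + bCoord

theorem eq_zero_of_length_eq_zero (x : MN) (h : length x = 0) : x = 0 :=
  eq_zero_iff.2 (by simp only [length, AddMonoidHom.add_apply] at h; omega)

instance : Subsingleton (AddUnits MN) :=
  AddUnits.subsingleton_of_length length eq_zero_of_length_eq_zero

theorem isAddAtomic : IsAddAtomic MN := isAddAtomic_of_length length eq_zero_of_length_eq_zero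

theorem isAddAtom_iff_coord {x : MN} :
    IsAddAtom x ↔
      (mCoord x = 2 ∨ mCoord x = 3) ∧ bCoord x = 0 ∨ mCoord x = 0 ∧ bCoord x = 1 := by
  have hx1 := mCoord_ne_one x
  have hab : bCoord x = 0 → aCoord x = 0 := aCoord_eq_zero_of_bCoord_eq_zero
  simp only [isAddAtom_iff_of_subsingleton, ne_eq, eq_zero_iff]
  constructor
  · rintro ⟨hx, hsplit⟩
    have split : ∀ y z : MN, mCoord y + mCoord z = mCoord x → aCoord y + aCoord z = aCoord x →
        bCoord y + bCoord z = bCoord x →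
        mCoord y = 0 ∧ bCoord y = 0 ∨ mCoord z = 0 ∧ bCoord z = 0 := fun y z hm ha hb =>
      hsplit y z (ext_coord (by simp [hm]) (by simp [ha]) (by simp [hb]))
    by_contra hne
    -- Otherwise `x` splits off `(m, 0)`, `(2, 0)` or `(0, (a, 1))` with a non-zero remainder.
    rcases Nat.eq_zero_or_pos (mCoord x) with hm | hm <;>
      rcases Nat.eq_zero_or_pos (bCoord x) with hb | hb
    · exact hx ⟨hm, hb⟩
    · have := split (mk 0 (aCoord x) 1 (by decide) (by simp)) (mk 0 0 (bCoord x - 1) (by decide)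
        (fun _ => rfl)) (by simp [hm]) (by simp) (by simp; omega)
      simp at this; omega
    · have := split (mk 2 0 0 (by decide) (fun _ => rfl)) (mk (mCoord x - 2) 0 0 (by omega)
        (fun _ => rfl)) (by simp; omega) (by simp [hab hb]) (by simp [hb])
      simp at this; omega
    · have := split (mk (mCoord x) 0 0 hx1 (fun _ => rfl))
        (mk 0 (aCoord x) (bCoord x) (by decide) hab) (by simp) (by simp) (by simp)
      simp at this; omega
  · intro h
    refine ⟨by omega, fun y z hyz => ?_⟩
    have hm := congrArg mCoord hyz
    have hb := congrArg bCoord hyz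
    rw [map_add] at hm hb
    have := mCoord_ne_one y
    have := mCoord_ne_one z
    omega

theorem isAddAtom_iff {x : MN} :
    IsAddAtom x ↔ x = aTwo ∨ x = aThree ∨ ∃ c, x = eAtom c := by
  rw [isAddAtom_iff_coord]
  constructor
  · rintro (⟨hm | hm, hb⟩ | ⟨hm, hb⟩)
    · have ha := aCoord_eq_zero_of_bCoord_eq_zero hb
      exact .inl (ext_coord (by simp [hm]) (by simp [ha]) (by simp [hb]))
    · have ha := aCoord_eq_zero_of_bCoord_eq_zero hb
      exact .inr (.inl (ext_coord (by simp [hm]) (by simp [ha]) (by simp [hb])))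
    · exact .inr (.inr ⟨aCoord x, ext_coord (by simp [hm]) (by simp) (by simp [hb])⟩)
  · rintro (rfl | rfl | ⟨c, rfl⟩) <;> simp

theorem isAddAtom_aTwo : IsAddAtom aTwo := isAddAtom_iff.2 (.inl rfl)
theorem isAddAtom_aThree : IsAddAtom aThree := isAddAtom_iff.2 (.inr (.inl rfl))
theorem isAddAtom_eAtom (c : ℕ) : IsAddAtom (eAtom c) :=
  isAddAtom_iff.2 (.inr (.inr ⟨c, rfl⟩))

theorem aTwo_ne_aThree : aTwo ≠ aThree := fun h => by simpa using congrArg mCoord h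
theorem aTwo_ne_eAtom (c : ℕ) : aTwo ≠ eAtom c := fun h => by simpa using congrArg bCoord h
theorem aThree_ne_eAtom (c : ℕ) : aThree ≠ eAtom c := fun h => by simpa using congrArg bCoord h

theorem eAtom_injective : Function.Injective eAtom := fun c d h => by
  simpa using congrArg aCoord h

theorem mCoord_le_and_ne_add_one_of_addDvd {a x : MN} (h : AddDvd a x) :
    mCoord a ≤ mCoord x ∧ mCoord x ≠ mCoord a + 1 := by
  obtain ⟨c, rfl⟩ := h
  have := mCoord_ne_one c
  rw [map_add]
  omega

theorem not_isAddPrime_aTwo : ¬IsAddPrime aTwo := fun ⟨_, h⟩ => by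
  have hdvd : AddDvd aTwo (aThree + aThree) :=
    ⟨aTwo + aTwo, ext_coord (by simp) (by simp) (by simp)⟩
  rcases h _ _ hdvd with h | h <;> simpa using mCoord_le_and_ne_add_one_of_addDvd h

theorem not_isAddPrime_aThree : ¬IsAddPrime aThree := fun ⟨_, h⟩ => by
  have hdvd : AddDvd aThree (aTwo + (aTwo + aTwo)) :=
    ⟨aThree, ext_coord (by simp) (by simp) (by simp)⟩
  rcases h _ _ hdvd with h | h <;> simpa using mCoord_le_and_ne_add_one_of_addDvd h

open Multiset

variable {x : MN} {z z₁ z₂ : Multiset MN}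

theorem mCoord_sum (hz : ∀ u ∈ z, IsAddAtom u) :
    mCoord z.sum = 2 * z.count aTwo + 3 * z.count aThree := by
  induction z using Multiset.induction_on with
  | empty => simp
  | cons u z ih =>
    rw [forall_mem_cons] at hz
    rcases isAddAtom_iff.1 hz.1 with rfl | rfl | ⟨c, rfl⟩ <;>
      simp [aTwo_ne_aThree, aTwo_ne_aThree.symm, aTwo_ne_eAtom, aThree_ne_eAtom,
        ih hz.2] <;> ring

theorem bCoord_sum_add_count (hz : ∀ u ∈ z, IsAddAtom u) :
    bCoord z.sum + z.count aTwo + z.count aThree = card z := by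
  induction z using Multiset.induction_on with
  | empty => simp
  | cons u z ih =>
    rw [forall_mem_cons] at hz
    have := ih hz.2
    rcases isAddAtom_iff.1 hz.1 with rfl | rfl | ⟨c, rfl⟩ <;>
      simp [aTwo_ne_aThree, aTwo_ne_aThree.symm, aTwo_ne_eAtom, aThree_ne_eAtom] <;>
      omega

theorem three_mul_card_add_count_aTwo (h₁ : IsFactorizationOf z₁ x)
    (h₂ : IsFactorizationOf z₂ x) :
    3 * card z₁ + z₂.count aTwo = 3 * card z₂ + z₁.count aTwo := by
  have := mCoord_sum h₁.1; have := mCoord_sum h₂.1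
  have := bCoord_sum_add_count h₁.1; have := bCoord_sum_add_count h₂.1
  rw [h₁.2] at *; rw [h₂.2] at *
  omega

theorem two_mul_card_add_count_aThree (h₁ : IsFactorizationOf z₁ x)
    (h₂ : IsFactorizationOf z₂ x) :
    2 * card z₁ + z₁.count aThree = 2 * card z₂ + z₂.count aThree := by
  have := mCoord_sum h₁.1; have := mCoord_sum h₂.1
  have := bCoord_sum_add_count h₁.1; have := bCoord_sum_add_count h₂.1
  rw [h₁.2] at *; rw [h₂.2] at *
  omega

theorem card_le_of_isFactorizationOf (h : IsFactorizationOf z x) :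
    card z ≤ mCoord x + bCoord x := by
  have := mCoord_sum h.1
  have := bCoord_sum_add_count h.1
  rw [h.2] at *
  omega

theorem mem_of_isFactorizationOf (h : IsFactorizationOf z x) {u : MN} (hu : u ∈ z) :
    u ∈ insert aTwo (insert aThree (eAtom '' Set.Iic (aCoord x))) := by
  rcases isAddAtom_iff.1 (h.1 u hu) with rfl | rfl | ⟨c, rfl⟩
  · exact .inl rfl
  · exact .inr (.inl rfl)
  · refine .inr (.inr ⟨c, ?_, rfl⟩)
    have := le_sum_of_mem (mem_map_of_mem aCoord hu)
    rwa [← map_multiset_sum, h.2, aCoord_eAtom] at this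

theorem finite_setOf_isFactorizationOf (x : MN) : {z | IsFactorizationOf z x}.Finite :=
  (finite_setOf_card_le_of_forall_mem ((((Set.finite_Iic _).image eAtom).insert _).insert _)
    (mCoord x + bCoord x)).subset fun _ hz =>
      ⟨card_le_of_isFactorizationOf hz, fun _ => mem_of_isFactorizationOf hz⟩

theorem isFFM : IsFFM MN := ⟨isAddAtomic, finite_setOf_isFactorizationOf⟩

theorem isPurelyLong_aTwo : IsPurelyLong aTwo := by
  refine ⟨isAddAtom_aTwo, not_isAddPrime_aTwo, fun x z₁ z₂ h₁ h₂ hirr ha => ?_⟩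
  have := three_mul_card_add_count_aTwo h₁ h₂
  have := count_pos.2 ha
  have := count_eq_zero.2 (hirr _ ha)
  omega

theorem isPurelyShort_aThree : IsPurelyShort aThree := by
  refine ⟨isAddAtom_aThree, not_isAddPrime_aThree, fun x z₁ z₂ h₁ h₂ hirr ha => ?_⟩
  have := two_mul_card_add_count_aThree h₁ h₂
  have := count_pos.2 ha
  have := count_eq_zero.2 (hirr _ ha)
  omega

theorem three_nsmul_aTwo : 3 • aTwo = 2 • aThree := ext_coord (by simp) (by simp) (by simp)

theorem isFactorizationOf_replicate_aThree :
    IsFactorizationOf (replicate 2 aThree) (3 • aTwo) :=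
  three_nsmul_aTwo ▸ isFactorizationOf_replicate 2 isAddAtom_aThree

theorem isFactorizationOf_eAtom_pair (c : ℕ) :
    IsFactorizationOf {eAtom c, eAtom (c + 2)} (2 • eAtom (c + 1)) := by
  refine ⟨by simp [isAddAtom_eAtom], ext_coord (by simp) ?_ (by simp)⟩
  simp
  ring

theorem irredundant_eAtom_pair (c : ℕ) :
    Irredundant {eAtom c, eAtom (c + 2)} (replicate 2 (eAtom (c + 1))) := by
  intro u hu hv
  rw [eq_of_mem_replicate hv] at hu
  simp [eAtom_injective.eq_iff] at hu

theorem isPurelyLong_iff {a : MN} : IsPurelyLong a ↔ a = aTwo := by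
  refine ⟨fun ⟨ha, _, hlong⟩ => ?_, fun h => h ▸ isPurelyLong_aTwo⟩
  rcases isAddAtom_iff.1 ha with rfl | rfl | ⟨c, rfl⟩
  · rfl
  · simpa using hlong _ _ _ isFactorizationOf_replicate_aThree
      (isFactorizationOf_replicate 3 isAddAtom_aTwo)
      (irredundant_replicate aTwo_ne_aThree.symm _ _)
      (mem_replicate.2 ⟨two_ne_zero, rfl⟩)
  · simpa using hlong _ _ _ (isFactorizationOf_eAtom_pair c)
      (isFactorizationOf_replicate 2 (isAddAtom_eAtom _)) (irredundant_eAtom_pair c) (by simp)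

theorem isPurelyShort_iff {a : MN} : IsPurelyShort a ↔ a = aThree := by
  refine ⟨fun ⟨ha, _, hshort⟩ => ?_, fun h => h ▸ isPurelyShort_aThree⟩
  rcases isAddAtom_iff.1 ha with rfl | rfl | ⟨c, rfl⟩
  · simpa using hshort _ _ _ (isFactorizationOf_replicate 3 isAddAtom_aTwo)
      isFactorizationOf_replicate_aThree (irredundant_replicate aTwo_ne_aThree _ _)
      (mem_replicate.2 ⟨three_ne_zero, rfl⟩)
  · rfl
  · simpa using hshort _ _ _ (isFactorizationOf_eAtom_pair c)
      (isFactorizationOf_replicate 2 (isAddAtom_eAtom _)) (irredundant_eAtom_pair c) (by simp)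

theorem x22_eq : x22 = 2 • eAtom 1 := ext_coord rfl rfl rfl

end MN

/-- For `M = ℕ₀ \ {1}` and `N = {(0,0)} ∪ (ℕ₀ × ℕ) ⊆ ℤ²`, the monoid `M × N` is
atomic; its purely long atoms are exactly `{(2,(0,0))}` and its purely short atoms
are exactly `{(3,(0,0))}` (so `M × N` is a PLS monoid); `M × N` is a finite
factorization monoid; and `M × N` is not length-factorial, since `(0,(2,2))` has the
two distinct equal-length factorizations `(0,(0,1)) + (0,(2,1))` and
`(0,(1,1)) + (0,(1,1))`. -/
theorem example_ffm_plsm_not_lfm :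
    IsAddAtomic MN ∧
    (∀ a : MN, IsPurelyLong a ↔ a = aTwo) ∧
    (∀ a : MN, IsPurelyShort a ↔ a = aThree) ∧
    IsFFM MN ∧
    IsFactorizationOf ({e01, e21} : Multiset MN) x22 ∧
    IsFactorizationOf ({e11, e11} : Multiset MN) x22 ∧
    ({e01, e21} : Multiset MN) ≠ {e11, e11} ∧
    Multiset.card ({e01, e21} : Multiset MN) = Multiset.card ({e11, e11} : Multiset MN) ∧
    ¬IsLFM MN := by
  have h₁ : IsFactorizationOf ({e01, e21} : Multiset MN) x22 :=
    MN.x22_eq ▸ MN.isFactorizationOf_eAtom_pair 0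
  have h₂ : IsFactorizationOf ({e11, e11} : Multiset MN) x22 :=
    MN.x22_eq ▸ isFactorizationOf_replicate 2 (MN.isAddAtom_eAtom 1)
  have hne : ({MN.eAtom 0, MN.eAtom 2} : Multiset MN) ≠ Multiset.replicate 2 (MN.eAtom 1) :=
    fun h => MN.irredundant_eAtom_pair 0 (MN.eAtom 0) (by simp) (by rw [← h]; simp)
  exact ⟨MN.isAddAtomic, fun _ => MN.isPurelyLong_iff, fun _ => MN.isPurelyShort_iff, MN.isFFM,
    h₁, h₂, hne, rfl, fun hlfm => hne (hlfm.2 x22 _ _ h₁ h₂ rfl)⟩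
end
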